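/- arXiv:1806.01064 — 3 statements merged into one kernel-verified Lean document; each statement's English description precedes it below -/
import Mathlib

section
/- Let G be a finite simple graph, let k be a positive integer, and let S = {x_1, x_2, …, x_k} be a set of k pairwise distinct vertices of G such that the induced subgraph G − S has an equitable k-coloring. If |N_G(x_i) \ S| ≤ k − i for every i with 1 ≤ i ≤ k (where N_G(x_i) is the set of neighbors of x_i in G), then G has an equitable k-coloring. -/
/-!
Give `x_1, …, x_k` pairwise distinct colours, `x_i` avoiding the at most `k − i` colours of its
neighbours outside `S`; such a choice exists by Hall's theorem. The result is a proper colouring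
of `G` in which every colour class of `G − S` gains exactly one vertex, so it stays equitable.
-/

open Finset

/-- Hall's condition holds because a set of indices with largest element `m` has at most
`m + 1` elements, while index `m` alone already has at least `m + 1` admissible values. -/
theorem Fin.exists_injective_forall_notMem {α : Type*} [Fintype α] [DecidableEq α] {n : ℕ}
    (F : Fin n → Finset α) (hF : ∀ i : Fin n, #(F i) + i < Fintype.card α) :
    ∃ f : Fin n → α, Function.Injective f ∧ ∀ i, f i ∉ F i := by
  suffices ∃ f : Fin n → α, Function.Injective f ∧ ∀ i, f i ∈ univ \ F i by
    simpa only [mem_sdiff, mem_univ, true_and] using this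
  refine (all_card_le_biUnion_card_iff_exists_injective _).1 fun s => ?_
  rcases s.eq_empty_or_nonempty with rfl | hs
  · simp
  set m := s.max' hs
  calc #s ≤ #(Iic m) := card_le_card fun i hi => mem_Iic.2 (s.le_max' i hi)
    _ = m + 1 := Fin.card_Iic m
    _ ≤ #(univ \ F m) := by rw [card_univ_sdiff]; have := hF m; omega
    _ ≤ #(s.biUnion fun i => univ \ F i) :=
      card_le_card (subset_biUnion_of_mem (fun i => univ \ F i) (s.max'_mem hs))

section Extension

variable {V ι α : Type*} [Fintype ι] [DecidableEq V] {S : Finset V} {x : ι → V}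
  {c : {v // v ∉ S} → α} {col : ι → α} {c' : V → α}

theorem exists_extension_of_injective (hx : Function.Injective x) (hS : S = univ.image x)
    (c : {v // v ∉ S} → α) (col : ι → α) :
    ∃ c' : V → α, (∀ i, c' (x i) = col i) ∧ ∀ v (hv : v ∉ S), c' v = c ⟨v, hv⟩ := by
  have hmem : ∀ v ∈ S, v ∈ Set.range x := by simp [hS]
  refine ⟨fun v => if h : v ∈ S then col (hx.invOfMemRange ⟨v, hmem v h⟩) else c ⟨v, h⟩,
    fun i => ?_, fun v hv => dif_neg hv⟩
  simp [hS]

theorem adj_ne_of_extension (G : SimpleGraph V) (hS : S = univ.image x)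
    (hcol : Function.Injective col) (hc : ∀ u v : {v // v ∉ S}, G.Adj u v → c u ≠ c v)
    (hnbr : ∀ i v (hv : v ∉ S), G.Adj (x i) v → c ⟨v, hv⟩ ≠ col i)
    (hxc : ∀ i, c' (x i) = col i) (hout : ∀ v (hv : v ∉ S), c' v = c ⟨v, hv⟩) :
    ∀ u v, G.Adj u v → c' u ≠ c' v := by
  have hmem : ∀ v ∈ S, ∃ i, x i = v := by simp [hS]
  have hx_adj : ∀ i v, G.Adj (x i) v → c' (x i) ≠ c' v := by
    intro i v hiv
    by_cases hv : v ∈ S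
    · obtain ⟨j, rfl⟩ := hmem v hv
      rw [hxc, hxc]
      rintro hij
      exact G.irrefl (hcol hij ▸ hiv)
    · rw [hxc, hout v hv]
      exact (hnbr i v hv hiv).symm
  intro u v huv
  by_cases hu : u ∈ S
  · obtain ⟨i, rfl⟩ := hmem u hu
    exact hx_adj i v huv
  by_cases hv : v ∈ S
  · obtain ⟨j, rfl⟩ := hmem v hv
    exact (hx_adj j u huv.symm).symm
  rw [hout u hu, hout v hv]
  exact hc ⟨u, hu⟩ ⟨v, hv⟩ huv

variable [Fintype V]

theorem card_filter_eq_of_extension [DecidableEq α] (hS : S = univ.image x)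
    (hcol : Function.Bijective col) (hxc : ∀ i, c' (x i) = col i)
    (hout : ∀ v (hv : v ∉ S), c' v = c ⟨v, hv⟩) (a : α) :
    #{v | c' v = a} = #{w | c w = a} + 1 := by
  obtain ⟨i, rfl⟩ := hcol.2 a
  have hin : ({v | c' v = col i} : Finset V).filter (· ∈ S) = {x i} := by
    ext v
    simp only [mem_filter, mem_univ, true_and, mem_singleton, hS, mem_image]
    constructor
    · rintro ⟨hv, j, -, rfl⟩
      rw [hxc, hcol.1.eq_iff] at hv
      rw [hv]
    · rintro rfl
      exact ⟨hxc i, i, rfl⟩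
  have hout' : ({v | c' v = col i} : Finset V).filter (· ∉ S) =
      ({w | c w = col i} : Finset {v // v ∉ S}).map (Function.Embedding.subtype _) := by
    ext v
    simp only [mem_filter, mem_univ, true_and, mem_map, Function.Embedding.coe_subtype]
    constructor
    · rintro ⟨hv, hvS⟩
      exact ⟨⟨v, hvS⟩, (hout v hvS) ▸ hv, rfl⟩
    · rintro ⟨w, hw, rfl⟩
      exact ⟨(hout w w.2).trans hw, w.2⟩
  rw [← card_filter_add_card_filter_not (s := {v | c' v = col i}) (· ∈ S), hin, hout',
    card_singleton, card_map, add_comm]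

end Extension

theorem equitable_coloring_extension_general {V : Type*} [Fintype V] [DecidableEq V]
    (G : SimpleGraph V) [DecidableRel G.Adj] (k : ℕ)
    (x : Fin k → V) (hx : Function.Injective x)
    (S : Finset V) (hS : S = Finset.univ.image x)
    (hnbr : ∀ i : Fin k, ((G.neighborFinset (x i)) \ S).card ≤ k - (i.val + 1))
    (hGS : ∃ c : {v : V // v ∉ S} → Fin k,
      (∀ u v : {v : V // v ∉ S}, G.Adj u.val v.val → c u ≠ c v) ∧
      ∀ i j : Fin k,
        (Finset.univ.filter fun v => c v = i).card ≤
          (Finset.univ.filter fun v => c v = j).card + 1) :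
    ∃ c : V → Fin k,
      (∀ u v : V, G.Adj u v → c u ≠ c v) ∧
      ∀ i j : Fin k,
        (Finset.univ.filter fun v => c v = i).card ≤
          (Finset.univ.filter fun v => c v = j).card + 1 := by
  obtain ⟨c, hc, hc_eq⟩ := hGS
  -- `F i`: the colours forbidden at `x i` by its neighbours outside `S`
  let F i := ((G.neighborFinset (x i) \ S).subtype (· ∉ S)).image c
  have hF i : #(F i) + i < Fintype.card (Fin k) := by
    have : #(F i) ≤ #(G.neighborFinset (x i) \ S) := by
      grw [card_image_le, card_subtype, filter_true_of_mem fun v hv => (mem_sdiff.1 hv).2]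
    have := hnbr i
    simp only [Fintype.card_fin]
    omega
  obtain ⟨col, hcol_inj, hcol⟩ := Fin.exists_injective_forall_notMem F hF
  have hcol_bij : Function.Bijective col :=
    (Fintype.bijective_iff_injective_and_card col).2 ⟨hcol_inj, rfl⟩
  have hnbr' i v (hv : v ∉ S) (hiv : G.Adj (x i) v) : c ⟨v, hv⟩ ≠ col i := fun h =>
    hcol i <| h ▸ mem_image_of_mem c <|
      mem_subtype.2 (mem_sdiff.2 ⟨(G.mem_neighborFinset _ _).2 hiv, hv⟩)
  obtain ⟨c', hxc, hout⟩ := exists_extension_of_injective hx hS c col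
  refine ⟨c', adj_ne_of_extension G hS hcol_inj hc hnbr' hxc hout, fun i j => ?_⟩
  rw [card_filter_eq_of_extension hS hcol_bij hxc hout,
    card_filter_eq_of_extension hS hcol_bij hxc hout]
  exact Nat.add_le_add_right (hc_eq i j) 1

/-- Let `S = {x 0, …, x (k-1)}` be a set of `k` distinct vertices of a finite simple
graph `G` such that `G − S` has an equitable `k`-coloring. If
`|N_G(x_i) \ S| ≤ k − i` for every `i` with `1 ≤ i ≤ k` (here `x i` with `i : Fin k`
plays the role of `x_{i+1}`, so the bound is `k - (i+1)`), then `G` has an equitable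
`k`-coloring. -/
theorem equitable_coloring_extension {V : Type*} [Fintype V] [DecidableEq V]
    (G : SimpleGraph V) [DecidableRel G.Adj] (k : ℕ) (hk : 0 < k)
    (x : Fin k → V) (hx : Function.Injective x)
    (S : Finset V) (hS : S = Finset.univ.image x)
    (hnbr : ∀ i : Fin k, ((G.neighborFinset (x i)) \ S).card ≤ k - (i.val + 1))
    (hGS : ∃ c : {v : V // v ∉ S} → Fin k,
      (∀ u v : {v : V // v ∉ S}, G.Adj u.val v.val → c u ≠ c v) ∧
      ∀ i j : Fin k,
        (Finset.univ.filter fun v => c v = i).card ≤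
          (Finset.univ.filter fun v => c v = j).card + 1) :
    ∃ c : V → Fin k,
      (∀ u v : V, G.Adj u v → c u ≠ c v) ∧
      ∀ i j : Fin k,
        (Finset.univ.filter fun v => c v = i).card ≤
          (Finset.univ.filter fun v => c v = j).card + 1 :=
  equitable_coloring_extension_general G k x hx S hS hnbr hGS
end

section
/- Let G be a finite simple graph with maximum degree Δ(G) ≤ 3, and let k be an integer with k ≥ Δ(G) + 1. Then G is equitably k-choosable: for every list assignment L with |L(v)| = k for all vertices v, there is a proper coloring c of G with c(v) ∈ L(v) for all v in which each color appears on at most ⌈|V(G)|/k⌉ vertices. -/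
/-!
Induct on the vertex set `s`, removing `k` vertices at a time, so that each colour class grows by
at most one per step. A set `X` of `k` vertices can be removed if, listed so that its `i`-th
vertex has fewer than `k - i` neighbours in `s \ X`, it can be coloured greedily with `k` new,
pairwise distinct colours once `s \ X` is coloured. As `Δ ≤ 3`, only the last three vertices of
the list are constrained, and a case analysis of the degrees inside `s` finds such an `X`, except
when `k = 4` and `s` induces a cubic graph with a vertex `v` whose neighbours `a, b, c` are pairwise
non-adjacent.

Then colour `H = s \ {v, a, b, c}` with classes of size at most `m`, where `|H| ≤ 4m`. Each of
`a, b, c` has two neighbours in `H`, hence two available colours. If they can get distinct colours,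
`v` takes a fourth one. Otherwise they share two available colours `χ₁, χ₂`; colouring `a, c` with
one of them and `b` with the other works if that class has room. If both classes are full, recolour
one of their vertices `w`, or swap the colour of `w` with that of a neighbour whose colour `w` sees
only once. If no such move exists, each of the `2m` vertices of the two classes has at least two
neighbours in the rest `U` of `H`, and exactly two only if both have a neighbour in `U`. Counting
the edges at `U`, six of which go to `{a, b, c}`, gives `3 · 2m ≤ 3|U| - 6 ≤ 6m - 6`.
-/

open Finset

namespace EquitableChoosability

variable {V : Type*} (G : SimpleGraph V) (L : V → Finset ℕ)

def IsListColoringOn (s : Finset V) (c : V → ℕ) : Prop :=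
  (∀ x ∈ s, c x ∈ L x) ∧ ∀ x ∈ s, ∀ y ∈ s, G.Adj x y → c x ≠ c y

def HasCappedColoring (s : Finset V) (M : ℕ) : Prop :=
  ∃ c, IsListColoringOn G L s c ∧ ∀ α, #{x ∈ s | c x = α} ≤ M

lemma hasCappedColoring_empty (M : ℕ) : HasCappedColoring G L ∅ M :=
  ⟨fun _ => 0, ⟨by simp, by simp⟩, by simp⟩

variable {G L} in
lemma HasCappedColoring.mono {s : Finset V} {M M' : ℕ} (h : HasCappedColoring G L s M)
    (hM : M ≤ M') : HasCappedColoring G L s M' :=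
  let ⟨c, hc, hcM⟩ := h
  ⟨c, hc, fun α => (hcM α).trans hM⟩

def IsRainbowExtension (c₀ : V → ℕ) (t X : Finset V) (c : V → ℕ) : Prop :=
  Set.InjOn c X ∧ ∀ x ∈ X, c x ∈ L x ∧ ∀ y ∈ t, G.Adj x y → c x ≠ c₀ y

def RainbowExtendable (t X : Finset V) : Prop :=
  ∀ c₀ : V → ℕ, ∃ c, IsRainbowExtension G L c₀ t X c

lemma rainbowExtendable_empty (t : Finset V) : RainbowExtendable G L t ∅ :=
  fun _ => ⟨fun _ => 0, by simp [IsRainbowExtension]⟩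

section

variable [DecidableEq V]

theorem hasCappedColoring_union {H S : Finset V} {c₁ c₂ : V → ℕ} {M : ℕ}
    (hc₁ : IsListColoringOn G L H c₁) (hc₂ : IsListColoringOn G L S c₂)
    (hcross : ∀ x ∈ S, ∀ y ∈ H, G.Adj x y → c₂ x ≠ c₁ y)
    (hM : ∀ α, #{x ∈ H | c₁ x = α} + #{x ∈ S | c₂ x = α} ≤ M) :
    HasCappedColoring G L (H ∪ S) M := by
  refine ⟨fun x => if x ∈ S then c₂ x else c₁ x, ⟨fun x hx => ?_, fun x hx y hy hxy => ?_⟩,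
    fun α => (card_le_card fun x hx => ?_).trans ((card_union_le _ _).trans (hM α))⟩
  · dsimp only
    split_ifs with h
    exacts [hc₂.1 x h, hc₁.1 x ((mem_union.1 hx).resolve_right h)]
  · replace hx := mem_union.1 hx
    replace hy := mem_union.1 hy
    dsimp only
    split_ifs with h₁ h₂ h₂
    · exact hc₂.2 x h₁ y h₂ hxy
    · exact hcross x h₁ y (hy.resolve_right h₂) hxy
    · exact (hcross y h₂ x (hx.resolve_right h₁) hxy.symm).symm
    · exact hc₁.2 x (hx.resolve_right h₁) y (hy.resolve_right h₂) hxy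
  · simp only [mem_filter, mem_union] at hx ⊢
    split_ifs at hx with h
    · exact Or.inr ⟨h, hx.2⟩
    · exact Or.inl ⟨hx.1.resolve_right h, hx.2⟩

variable {G L} in
theorem HasCappedColoring.union_of_rainbowExtendable {t X : Finset V} {M : ℕ}
    (ht : HasCappedColoring G L t M) (hX : RainbowExtendable G L t X) :
    HasCappedColoring G L (t ∪ X) (M + 1) := by
  obtain ⟨c₀, hc₀, hc₀M⟩ := ht
  obtain ⟨c, hinj, hc⟩ := hX c₀
  refine hasCappedColoring_union G L hc₀ ⟨fun x hx => (hc x hx).1, fun x hx y hy hxy h => ?_⟩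
    (fun x hx y hy hxy => (hc x hx).2 y hy hxy) fun α => add_le_add (hc₀M α) ?_
  · exact G.ne_of_adj hxy (hinj hx hy h)
  · exact card_le_one.2 fun x hx y hy => hinj (mem_filter.1 hx).1 (mem_filter.1 hy).1
      ((mem_filter.1 hx).2.trans (mem_filter.1 hy).2.symm)

variable (k : ℕ) in
def HasRainbowBlock (s : Finset V) : Prop :=
  ∃ X ⊆ s, #X = k ∧ RainbowExtendable G L (s \ X) X

end

variable [DecidableRel G.Adj]

def nbrsIn (s : Finset V) (x : V) : Finset V := {y ∈ s | G.Adj x y}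

variable {G} in
@[simp] lemma mem_nbrsIn {s : Finset V} {x y : V} : y ∈ nbrsIn G s x ↔ y ∈ s ∧ G.Adj x y :=
  mem_filter

lemma nbrsIn_subset (s : Finset V) (x : V) : nbrsIn G s x ⊆ s := filter_subset _ _

lemma nbrsIn_mono {s t : Finset V} (h : s ⊆ t) (x : V) : nbrsIn G s x ⊆ nbrsIn G t x :=
  filter_subset_filter _ h

lemma card_nbrsIn_le_degree [Fintype V] (s : Finset V) (x : V) :
    #(nbrsIn G s x) ≤ G.degree x := by
  rw [← G.card_neighborFinset_eq_degree]
  exact card_le_card fun y hy => by simpa using (mem_nbrsIn.1 hy).2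

lemma sum_card_nbrsIn_comm (P Q : Finset V) :
    ∑ x ∈ P, #(nbrsIn G Q x) = ∑ y ∈ Q, #(nbrsIn G P y) := by
  simp only [nbrsIn, card_filter]
  rw [sum_comm]
  exact sum_congr rfl fun y _ => sum_congr rfl fun x _ => by simp only [G.adj_comm]

lemma three_mul_card_le_sum {W U : Finset V}
    (hW : ∀ w ∈ W, 6 ≤ 2 * #(nbrsIn G U w) + #(nbrsIn G {u ∈ U | (nbrsIn G U u).Nonempty} w))
    (hU : ∀ u ∈ U, #(nbrsIn G W u) + #(nbrsIn G U u) ≤ 3) :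
    3 * #W ≤ ∑ u ∈ U, (#(nbrsIn G W u) + #(nbrsIn G U u)) := by
  set F := {u ∈ U | (nbrsIn G U u).Nonempty}
  have hW' : 6 * #W ≤ 2 * ∑ u ∈ U, #(nbrsIn G W u) + ∑ u ∈ F, #(nbrsIn G W u) :=
    calc 6 * #W = ∑ _w ∈ W, 6 := by rw [sum_const, smul_eq_mul, mul_comm]
      _ ≤ ∑ w ∈ W, (2 * #(nbrsIn G U w) + #(nbrsIn G F w)) := sum_le_sum hW
      _ = _ := by rw [sum_add_distrib, ← mul_sum, sum_card_nbrsIn_comm G W U,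
          sum_card_nbrsIn_comm G W F]
  have hF : ∑ u ∈ F, #(nbrsIn G W u) ≤ 2 * ∑ u ∈ U, #(nbrsIn G U u) :=
    calc ∑ u ∈ F, #(nbrsIn G W u) ≤ ∑ u ∈ F, 2 * #(nbrsIn G U u) := sum_le_sum fun u hu => by
          obtain ⟨hu, hne⟩ := mem_filter.1 hu
          have := hU u hu
          have := hne.card_pos
          omega
      _ ≤ ∑ u ∈ U, 2 * #(nbrsIn G U u) := sum_le_sum_of_subset (filter_subset _ _)
      _ = _ := by rw [mul_sum]
  rw [sum_add_distrib]
  omega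

def palette (c₀ : V → ℕ) (t : Finset V) (x : V) : Finset ℕ :=
  L x \ (nbrsIn G t x).image c₀

variable {G L} in
lemma mem_palette {c₀ : V → ℕ} {t : Finset V} {x : V} {γ : ℕ} :
    γ ∈ palette G L c₀ t x ↔ γ ∈ L x ∧ ∀ y ∈ nbrsIn G t x, c₀ y ≠ γ := by
  simp [palette]

lemma card_sdiff_le_card_palette (c₀ : V → ℕ) (t : Finset V) (x : V) :
    #(L x) - #(nbrsIn G t x) ≤ #(palette G L c₀ t x) :=
  (Nat.sub_le_sub_left card_image_le _).trans (le_card_sdiff _ _)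

lemma sdiff_subset_image_of_palette_subset {c₀ : V → ℕ} {t : Finset V} {x : V} {P : Finset ℕ}
    (h : palette G L c₀ t x ⊆ P) : L x \ P ⊆ (nbrsIn G {y ∈ t | c₀ y ∉ P} x).image c₀ := by
  intro γ hγ
  rw [mem_sdiff] at hγ
  have : γ ∉ palette G L c₀ t x := fun h' => hγ.2 (h h')
  simp only [mem_palette, not_and, not_forall, not_not] at this
  obtain ⟨y, hy, rfl⟩ := this hγ.1
  exact mem_image_of_mem _ (by simp_all)

lemma card_sdiff_le_card_nbrsIn_of_palette_subset {c₀ : V → ℕ} {t : Finset V} {x : V} {P : Finset ℕ}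
    (h : palette G L c₀ t x ⊆ P) : #(L x \ P) ≤ #(nbrsIn G {y ∈ t | c₀ y ∉ P} x) :=
  (card_le_card (sdiff_subset_image_of_palette_subset G L h)).trans card_image_le

variable [DecidableEq V]

lemma card_nbrsIn_sdiff_add_card_le {s Y T : Finset V} {x : V} (hTY : T ⊆ Y)
    (hTs : T ⊆ nbrsIn G s x) : #(nbrsIn G (s \ Y) x) + #T ≤ #(nbrsIn G s x) := by
  rw [← card_union_of_disjoint (disjoint_left.2 fun y hy hyT =>
    (mem_sdiff.1 (mem_nbrsIn.1 hy).1).2 (hTY hyT))]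
  exact card_le_card (union_subset (nbrsIn_mono G sdiff_subset x) hTs)

lemma nbrsIn_sdiff_eq_empty {s Y : Finset V} {x : V} (h : nbrsIn G s x ⊆ Y) :
    nbrsIn G (s \ Y) x = ∅ :=
  eq_empty_of_forall_notMem fun y hy => by
    simp only [mem_nbrsIn, mem_sdiff] at hy
    exact hy.1.2 (h (mem_nbrsIn.2 ⟨hy.1.1, hy.2⟩))

lemma card_nbrsIn_sdiff_add_one_le {s Y : Finset V} {x z : V} (hzY : z ∈ Y)
    (hz : z ∈ nbrsIn G s x) : #(nbrsIn G (s \ Y) x) + 1 ≤ #(nbrsIn G s x) := by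
  simpa using
    card_nbrsIn_sdiff_add_card_le G (singleton_subset_iff.2 hzY) (singleton_subset_iff.2 hz)

lemma card_nbrsIn_sdiff_add_two_le {s Y : Finset V} {x z z' : V} (hzY : z ∈ Y) (hz'Y : z' ∈ Y)
    (hz : z ∈ nbrsIn G s x) (hz' : z' ∈ nbrsIn G s x) (hzz' : z ≠ z') :
    #(nbrsIn G (s \ Y) x) + 2 ≤ #(nbrsIn G s x) := by
  simpa [card_pair hzz'] using card_nbrsIn_sdiff_add_card_le G (T := {z, z'})
    (by simp [insert_subset_iff, hzY, hz'Y]) (by simp [insert_subset_iff, hz, hz'])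

lemma card_nbrsIn_union {P Q : Finset V} (h : Disjoint P Q) (x : V) :
    #(nbrsIn G (P ∪ Q) x) = #(nbrsIn G P x) + #(nbrsIn G Q x) := by
  rw [nbrsIn, filter_union, card_union_of_disjoint (disjoint_filter_filter h)]
  rfl

variable {G L} {k : ℕ}

lemma RainbowExtendable.insert (hL : ∀ x, #(L x) = k) {t X : Finset V} {y : V}
    (hX : RainbowExtendable G L t X) (hy : #(nbrsIn G t y) + #(insert y X) ≤ k) :
    RainbowExtendable G L t (insert y X) := by
  by_cases hyX : y ∈ X
  · rwa [insert_eq_of_mem hyX]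
  intro c₀
  obtain ⟨c, hinj, hc⟩ := hX c₀
  rw [card_insert_of_notMem hyX] at hy
  set forbidden := (nbrsIn G t y).image c₀ ∪ X.image c
  obtain ⟨γ, hγ⟩ : (L y \ forbidden).Nonempty := by
    rw [← card_pos]
    have := le_card_sdiff forbidden (L y)
    have := hL y
    have : #forbidden ≤ #(nbrsIn G t y) + #X :=
      (card_union_le _ _).trans (add_le_add card_image_le card_image_le)
    omega
  simp only [forbidden, mem_sdiff, mem_union, mem_image, mem_nbrsIn, not_or, not_exists,
    not_and] at hγ
  have hupd : ∀ x ∈ X, Function.update c y γ x = c x := fun x hx =>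
    Function.update_of_ne (ne_of_mem_of_not_mem hx hyX) _ _
  refine ⟨Function.update c y γ, ?_, ?_⟩
  · rw [coe_insert, Set.injOn_insert (by simpa using hyX)]
    refine ⟨fun x hx x' hx' h => hinj hx hx' (by rwa [hupd x hx, hupd x' hx'] at h), ?_⟩
    rintro ⟨x, hx, h⟩
    rw [hupd x hx, Function.update_self] at h
    exact hγ.2.2 x hx h
  · intro x hx
    rcases mem_insert.1 hx with rfl | hx
    · simp only [Function.update_self]
      exact ⟨hγ.1, fun y' hy' hadj h => hγ.2.1 y' ⟨hy', hadj⟩ h.symm⟩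
    · rw [hupd x hx]
      exact hc x hx

lemma RainbowExtendable.union (hL : ∀ x, #(L x) = k) {t X B : Finset V}
    (hX : RainbowExtendable G L t X) (hB : ∀ x ∈ B, #(nbrsIn G t x) + #(X ∪ B) ≤ k) :
    RainbowExtendable G L t (X ∪ B) := by
  induction B using Finset.induction_on with
  | empty => simpa using hX
  | insert y B _ ih =>
    rw [union_insert] at hB ⊢
    refine (ih fun x hx => ?_).insert hL (hB y (mem_insert_self y B))
    exact (Nat.add_le_add_left (card_le_card (subset_insert y _)) _).trans
      (hB x (mem_insert_of_mem hx))

lemma rainbowExtendable_of_forall (hL : ∀ x, #(L x) = k) {t B : Finset V}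
    (hB : ∀ x ∈ B, #(nbrsIn G t x) + #B ≤ k) : RainbowExtendable G L t B := by
  simpa using (rainbowExtendable_empty G L t).union hL (by simpa using hB)

lemma rainbowExtendable_of_star (hL : ∀ x, #(L x) = k) {t X N : Finset V} {v : V}
    (hX : #X = k) (hv : v ∈ X) (hN : N ⊆ X) (hvN : v ∉ N)
    (hpad : ∀ x ∈ X, #(nbrsIn G t x) ≤ #N + 1) (hN1 : ∀ x ∈ N, #(nbrsIn G t x) ≤ 1)
    (hv0 : nbrsIn G t v = ∅) : RainbowExtendable G L t X := by
  have hvN' : insert v N ⊆ X := insert_subset hv hN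
  have hPN : X \ insert v N ∪ N = X.erase v := by
    ext x
    simp only [mem_union, mem_sdiff, mem_insert, mem_erase]
    constructor
    · rintro (⟨hx, hxv⟩ | hx)
      · exact ⟨fun h => hxv (Or.inl h), hx⟩
      · exact ⟨fun h => hvN (h ▸ hx), hN hx⟩
    · rintro ⟨hxv, hx⟩
      by_cases hxN : x ∈ N
      exacts [Or.inr hxN, Or.inl ⟨hx, by tauto⟩]
  have hP : #(X \ insert v N) = k - (#N + 1) := by
    rw [card_sdiff_of_subset hvN', card_insert_of_notMem hvN, hX]
  have hE : #(X.erase v) = k - 1 := by rw [card_erase_of_mem hv, hX]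
  have hk : #N + 1 ≤ k := hX ▸ card_insert_of_notMem hvN ▸ card_le_card hvN'
  have hpads := rainbowExtendable_of_forall (G := G) hL (t := t) (B := X \ insert v N)
    fun x hx => by
    have := hpad x (mem_sdiff.1 hx).1
    omega
  have hrest := hpads.union hL (B := N) fun x hx => by
    have := hN1 x hx
    rw [hPN, hE]
    omega
  rw [hPN] at hrest
  simpa [insert_erase hv] using hrest.insert hL (y := v) (by simp [hv0, insert_erase hv, hX])

lemma rainbowExtendable_of_tail (hL : ∀ x, #(L x) = k) {t X : Finset V} {y₁ y₂ y₃ : V}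
    (hX : #X = k) (hy₁ : y₁ ∈ X) (hy₂ : y₂ ∈ X) (hy₃ : y₃ ∈ X)
    (h₁₂ : y₁ ≠ y₂) (h₁₃ : y₁ ≠ y₃) (h₂₃ : y₂ ≠ y₃)
    (hdeg : ∀ x ∈ X, #(nbrsIn G t x) ≤ 3) (h₁ : #(nbrsIn G t y₁) ≤ 2)
    (h₂ : #(nbrsIn G t y₂) ≤ 1) (h₃ : nbrsIn G t y₃ = ∅) : RainbowExtendable G L t X := by
  have hsub : ({y₁, y₂, y₃} : Finset V) ⊆ X := by simp [insert_subset_iff, *]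
  have hcard : #({y₁, y₂, y₃} : Finset V) = 3 := by simp [*]
  have hk : 3 ≤ k := hX ▸ hcard ▸ card_le_card hsub
  have hP : #(X \ {y₁, y₂, y₃}) = k - 3 := by rw [card_sdiff_of_subset hsub, hcard, hX]
  have e₁ : insert y₁ (X \ {y₁, y₂, y₃}) = X \ {y₂, y₃} := by
    ext x; by_cases hx : x = y₁ <;> simp [hx, hy₁, h₁₂, h₁₃]
  have e₂ : insert y₂ (X \ {y₂, y₃}) = X.erase y₃ := by
    ext x; by_cases hx : x = y₂ <;> simp [hx, hy₂, h₂₃, and_comm]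
  have c₂ : #(X \ {y₂, y₃}) = k - 2 := by
    rw [card_sdiff_of_subset (by simp [insert_subset_iff, *]), card_pair h₂₃, hX]
  have c₃ : #(X.erase y₃) = k - 1 := by rw [card_erase_of_mem hy₃, hX]
  have hpads := rainbowExtendable_of_forall (G := G) hL (t := t) (B := X \ {y₁, y₂, y₃})
    fun x hx => by
    have := hdeg x (mem_sdiff.1 hx).1
    omega
  have s₁ := hpads.insert hL (y := y₁) (by rw [e₁, c₂]; omega)
  rw [e₁] at s₁
  have s₂ := s₁.insert hL (y := y₂) (by rw [e₂, c₃]; omega)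
  rw [e₂] at s₂
  simpa [insert_erase hy₃] using s₂.insert hL (y := y₃) (by simp [h₃, insert_erase hy₃, hX])

lemma hasRainbowBlock_of_forall_card_nbrsIn_le_two (hL : ∀ x, #(L x) = k) {s : Finset V}
    (hs2 : ∀ x ∈ s, #(nbrsIn G s x) ≤ 2) (hsk : ∀ x ∈ s, #(nbrsIn G s x) < k) (hks : k ≤ #s)
    (hs : s.Nonempty) : HasRainbowBlock G L k s := by
  obtain ⟨v, hv, hvmax⟩ := exists_max_image s (fun x => #(nbrsIn G s x)) hs
  have hvN : v ∉ nbrsIn G s v := fun h => G.irrefl (mem_nbrsIn.1 h).2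
  have hY : #(insert v (nbrsIn G s v)) ≤ k := (card_insert_le _ _).trans (hsk v hv)
  obtain ⟨X, hYX, hXs, hX⟩ :=
    exists_subsuperset_card_eq (insert_subset hv (nbrsIn_subset G s v)) hY hks
  refine ⟨X, hXs, hX, rainbowExtendable_of_star hL hX (hYX (mem_insert_self _ _))
    ((subset_insert _ _).trans hYX) hvN (fun x hx => ?_) (fun x hx => ?_)
    (nbrsIn_sdiff_eq_empty G ((subset_insert _ _).trans hYX))⟩
  · exact (card_le_card (nbrsIn_mono G sdiff_subset x)).trans
      ((hvmax x (hXs hx)).trans (Nat.le_succ _))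
  · have := card_nbrsIn_sdiff_add_one_le G (hYX (mem_insert_self v _))
      (mem_nbrsIn.2 ⟨hv, (mem_nbrsIn.1 hx).2.symm⟩)
    have := hs2 x (mem_nbrsIn.1 hx).1
    omega

lemma hasRainbowBlock_of_tail (hL : ∀ x, #(L x) = k) {s Y : Finset V}
    (hs3 : ∀ x ∈ s, #(nbrsIn G s x) ≤ 3) (hks : k ≤ #s) (hYs : Y ⊆ s) (hYk : #Y ≤ k)
    {y₁ y₂ y₃ : V} (hy₁ : y₁ ∈ Y) (hy₂ : y₂ ∈ Y) (hy₃ : y₃ ∈ Y)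
    (h₁₂ : y₁ ≠ y₂) (h₁₃ : y₁ ≠ y₃) (h₂₃ : y₂ ≠ y₃)
    (h₁ : #(nbrsIn G (s \ Y) y₁) ≤ 2) (h₂ : #(nbrsIn G (s \ Y) y₂) ≤ 1)
    (h₃ : nbrsIn G s y₃ ⊆ Y) : HasRainbowBlock G L k s := by
  obtain ⟨X, hYX, hXs, hX⟩ := exists_subsuperset_card_eq hYs hYk hks
  have hmono : ∀ x, #(nbrsIn G (s \ X) x) ≤ #(nbrsIn G (s \ Y) x) := fun x =>
    card_le_card (nbrsIn_mono G (sdiff_subset_sdiff le_rfl hYX) x)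
  refine ⟨X, hXs, hX, rainbowExtendable_of_tail hL hX (hYX hy₁) (hYX hy₂) (hYX hy₃)
    h₁₂ h₁₃ h₂₃ (fun x hx => ?_) ((hmono y₁).trans h₁) ((hmono y₂).trans h₂)
    (nbrsIn_sdiff_eq_empty G (h₃.trans hYX))⟩
  exact (card_le_card (nbrsIn_mono G sdiff_subset x)).trans (hs3 x (hXs hx))

section AtLeastFourColors

variable (hL : ∀ x, #(L x) = k) {s : Finset V} (hs3 : ∀ x ∈ s, #(nbrsIn G s x) ≤ 3)
  (hk : 4 ≤ k) (hks : k ≤ #s)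
include hL hs3 hk hks

lemma hasRainbowBlock_of_adj_of_card_le_two {z y : V} (hz : z ∈ s)
    (hz3 : #(nbrsIn G s z) = 3) (hy : y ∈ nbrsIn G s z) (hy2 : #(nbrsIn G s y) ≤ 2) :
    HasRainbowBlock G L k s := by
  obtain ⟨o, ho, hoy⟩ := exists_mem_ne (by omega : 1 < #(nbrsIn G s z)) y
  rw [mem_nbrsIn] at ho hy
  have hY : #(insert z (nbrsIn G s z)) ≤ k := (card_insert_le _ _).trans (by omega)
  refine hasRainbowBlock_of_tail hL hs3 hks (insert_subset hz (nbrsIn_subset G s z)) hY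
    (mem_insert_of_mem (mem_nbrsIn.2 ho)) (mem_insert_of_mem (mem_nbrsIn.2 hy))
    (mem_insert_self _ _) hoy (G.ne_of_adj ho.2).symm (G.ne_of_adj hy.2).symm ?_ ?_
    (subset_insert _ _)
  · have := card_nbrsIn_sdiff_add_one_le G (mem_insert_self z (nbrsIn G s z))
      (mem_nbrsIn.2 ⟨hz, ho.2.symm⟩)
    have := hs3 o ho.1
    omega
  · have := card_nbrsIn_sdiff_add_one_le G (mem_insert_self z (nbrsIn G s z))
      (mem_nbrsIn.2 ⟨hz, hy.2.symm⟩)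
    omega

lemma hasRainbowBlock_of_triangle {z y₁ y₂ : V} (hz : z ∈ s) (hy₁ : y₁ ∈ nbrsIn G s z)
    (hy₂ : y₂ ∈ nbrsIn G s z) (h₁₂ : G.Adj y₁ y₂) : HasRainbowBlock G L k s := by
  set Y := insert z (nbrsIn G s z)
  have hY : #Y ≤ k := (card_insert_le _ _).trans (by have := hs3 z hz; omega)
  rw [mem_nbrsIn] at hy₁ hy₂
  refine hasRainbowBlock_of_tail hL hs3 hks (insert_subset hz (nbrsIn_subset G s z)) hY
    (mem_insert_of_mem (mem_nbrsIn.2 hy₁)) (mem_insert_of_mem (mem_nbrsIn.2 hy₂))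
    (mem_insert_self _ _) (G.ne_of_adj h₁₂) (G.ne_of_adj hy₁.2).symm (G.ne_of_adj hy₂.2).symm
    ?_ ?_ (subset_insert _ _)
  · have := card_nbrsIn_sdiff_add_one_le G (mem_insert_self z (nbrsIn G s z))
      (mem_nbrsIn.2 ⟨hz, hy₁.2.symm⟩)
    have := hs3 y₁ hy₁.1
    omega
  · have := card_nbrsIn_sdiff_add_two_le G (mem_insert_self z (nbrsIn G s z))
      (mem_insert_of_mem (mem_nbrsIn.2 hy₁)) (mem_nbrsIn.2 ⟨hz, hy₂.2.symm⟩)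
      (mem_nbrsIn.2 ⟨hy₁.1, h₁₂.symm⟩) (G.ne_of_adj hy₁.2)
    have := hs3 y₂ hy₂.1
    omega

lemma hasRainbowBlock_of_nbrsIn_eq_empty {w v a₁ a₂ : V} (hw : w ∈ s)
    (hw0 : nbrsIn G s w = ∅) (hv : v ∈ s) (ha₁ : a₁ ∈ nbrsIn G s v) (ha₂ : a₂ ∈ nbrsIn G s v)
    (ha₁₂ : a₁ ≠ a₂) : HasRainbowBlock G L k s := by
  have hisol : ∀ x ∈ s, ¬G.Adj x w := fun x hx hxw => by
    simpa [hw0] using mem_nbrsIn.2 ⟨hx, hxw.symm⟩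
  set Y : Finset V := {a₁, a₂, v, w}
  have hvY : v ∈ Y := by simp [Y]
  have ha₂s := (mem_nbrsIn.1 ha₂).1
  refine hasRainbowBlock_of_tail hL hs3 hks (Y := Y) (y₁ := a₂) (y₂ := v) (y₃ := w)
    (by simp [Y, insert_subset_iff, (mem_nbrsIn.1 ha₁).1, ha₂s, hv, hw])
    (card_le_four.trans hk) (by simp [Y]) hvY (by simp [Y]) (G.ne_of_adj (mem_nbrsIn.1 ha₂).2).symm
    (fun h => hisol v hv (h ▸ (mem_nbrsIn.1 ha₂).2)) (fun h => hisol a₁ (mem_nbrsIn.1 ha₁).1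
      (h ▸ (mem_nbrsIn.1 ha₁).2.symm)) ?_ ?_ (by simp [hw0])
  · have := card_nbrsIn_sdiff_add_one_le G hvY (mem_nbrsIn.2 ⟨hv, (mem_nbrsIn.1 ha₂).2.symm⟩)
    have := hs3 a₂ ha₂s
    omega
  · have := card_nbrsIn_sdiff_add_two_le G (Y := Y) (by simp [Y]) (by simp [Y]) ha₁ ha₂ ha₁₂
    have := hs3 v hv
    omega

lemma hasRainbowBlock_of_nbrsIn_eq_singleton {w n v y : V} (hw : w ∈ s)
    (hw1 : nbrsIn G s w = {n}) (hn2 : #(nbrsIn G s n) ≤ 2) (hv : v ∈ s)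
    (hv3 : #(nbrsIn G s v) = 3) (hy : y ∈ nbrsIn G s v) : HasRainbowBlock G L k s := by
  have hn : n ∈ nbrsIn G s w := by simp [hw1]
  rw [mem_nbrsIn] at hn
  set Y : Finset V := {y, v, n, w}
  have hnY : n ∈ Y := by simp [Y]
  have hwY : w ∈ Y := by simp [Y]
  refine hasRainbowBlock_of_tail hL hs3 hks (Y := Y) (y₁ := v) (y₂ := n) (y₃ := w)
    (by simp [Y, insert_subset_iff, (mem_nbrsIn.1 hy).1, hn.1, hv, hw])
    (card_le_four.trans hk) (by simp [Y]) hnY hwY (fun h => by subst h; omega)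
    (fun h => by subst h; simp [hw1] at hv3) (G.ne_of_adj hn.2).symm ?_ ?_ (by simp [Y, hw1])
  · have := card_nbrsIn_sdiff_add_one_le G (by simp [Y] : y ∈ Y) hy
    omega
  · have := card_nbrsIn_sdiff_add_one_le G hwY (mem_nbrsIn.2 ⟨hw, hn.2.symm⟩)
    omega

lemma hasRainbowBlock_of_nbrsIn_eq_pair {w n₁ n₂ : V} (hw : w ∈ s)
    (hw2 : nbrsIn G s w = {n₁, n₂}) (hn : n₁ ≠ n₂) (h₁ : #(nbrsIn G s n₁) ≤ 2)
    (h₂ : #(nbrsIn G s n₂) ≤ 2) : HasRainbowBlock G L k s := by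
  have hn₁ : n₁ ∈ nbrsIn G s w := by simp [hw2]
  have hn₂ : n₂ ∈ nbrsIn G s w := by simp [hw2]
  rw [mem_nbrsIn] at hn₁ hn₂
  set Y : Finset V := {w, n₁, n₂}
  have hwY : w ∈ Y := by simp [Y]
  refine hasRainbowBlock_of_tail hL hs3 hks (Y := Y) (y₁ := n₁) (y₂ := n₂) (y₃ := w)
    (by simp [Y, insert_subset_iff, hn₁.1, hn₂.1, hw]) (card_le_three.trans (by omega))
    (by simp [Y]) (by simp [Y]) hwY hn (G.ne_of_adj hn₁.2).symm (G.ne_of_adj hn₂.2).symm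
    ((card_le_card (nbrsIn_mono G sdiff_subset n₁)).trans h₁) ?_ (by simp [Y, hw2])
  have := card_nbrsIn_sdiff_add_one_le G hwY (mem_nbrsIn.2 ⟨hw, hn₂.2.symm⟩)
  omega

lemma hasRainbowBlock_of_card_nbrsIn_le_two {w v : V} (hw : w ∈ s)
    (hw2 : #(nbrsIn G s w) ≤ 2) (hv : v ∈ s) (hv3 : #(nbrsIn G s v) = 3)
    (hA : ∀ z ∈ s, ∀ y ∈ nbrsIn G s z, #(nbrsIn G s z) = 3 → 2 < #(nbrsIn G s y)) :
    HasRainbowBlock G L k s := by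
  have hlow : ∀ n ∈ nbrsIn G s w, #(nbrsIn G s n) ≤ 2 := fun n hn => by
    rw [mem_nbrsIn] at hn
    by_contra h
    have := hA n hn.1 w (mem_nbrsIn.2 ⟨hw, hn.2.symm⟩) (le_antisymm (hs3 n hn.1) (by omega))
    omega
  obtain h | h | h : #(nbrsIn G s w) = 0 ∨ #(nbrsIn G s w) = 1 ∨ #(nbrsIn G s w) = 2 := by omega
  · obtain ⟨a₁, ha₁, a₂, ha₂, ha⟩ := one_lt_card.1 (by omega : 1 < #(nbrsIn G s v))
    exact hasRainbowBlock_of_nbrsIn_eq_empty hL hs3 hk hks hw (card_eq_zero.1 h) hv ha₁ ha₂ ha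
  · obtain ⟨n, hn⟩ := card_eq_one.1 h
    obtain ⟨y, hy⟩ := card_pos.1 (by omega : 0 < #(nbrsIn G s v))
    exact hasRainbowBlock_of_nbrsIn_eq_singleton hL hs3 hk hks hw hn (hlow n (by simp [hn])) hv
      hv3 hy
  · obtain ⟨n₁, n₂, hn, hw2⟩ := card_eq_two.1 h
    exact hasRainbowBlock_of_nbrsIn_eq_pair hL hs3 hk hks hw hw2 hn (hlow _ (by simp [hw2]))
      (hlow _ (by simp [hw2]))

end AtLeastFourColors

variable (G) in
structure IsCubicClaw (s : Finset V) (v a b c : V) : Prop where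
  cubic : ∀ x ∈ s, #(nbrsIn G s x) = 3
  center_mem : v ∈ s
  nbrsIn_center : nbrsIn G s v = {a, b, c}
  not_adj_ab : ¬G.Adj a b
  not_adj_ac : ¬G.Adj a c
  not_adj_bc : ¬G.Adj b c

namespace IsCubicClaw

variable {s : Finset V} {v a b c : V} (hK : IsCubicClaw G s v a b c)
include hK

lemma mem_adj_of_mem {x : V} (hx : x ∈ ({a, b, c} : Finset V)) : x ∈ s ∧ G.Adj v x := by
  rw [← hK.nbrsIn_center] at hx
  exact mem_nbrsIn.1 hx

lemma leaves_ne : a ≠ b ∧ a ≠ c ∧ b ≠ c := by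
  have h := hK.cubic v hK.center_mem
  rw [hK.nbrsIn_center] at h
  refine ⟨fun hab => ?_, fun hac => ?_, fun hbc => ?_⟩
  · rw [hab, insert_eq_of_mem (mem_insert_self _ _)] at h
    exact absurd h (card_le_two.trans_lt (by norm_num)).ne
  · rw [hac, insert_eq_of_mem (by simp)] at h
    exact absurd h (card_le_two.trans_lt (by norm_num)).ne
  · rw [hbc, insert_eq_of_mem (mem_singleton_self c)] at h
    exact absurd h (card_le_two.trans_lt (by norm_num)).ne

lemma center_ne : v ≠ a ∧ v ≠ b ∧ v ≠ c :=
  ⟨G.ne_of_adj (hK.mem_adj_of_mem (by simp)).2, G.ne_of_adj (hK.mem_adj_of_mem (by simp)).2,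
    G.ne_of_adj (hK.mem_adj_of_mem (by simp)).2⟩

lemma card_eq_four : #({v, a, b, c} : Finset V) = 4 := by
  obtain ⟨hva, hvb, hvc⟩ := hK.center_ne
  obtain ⟨hab, hac, hbc⟩ := hK.leaves_ne
  simp [*]

lemma insert_subset : ({v, a, b, c} : Finset V) ⊆ s :=
  Finset.insert_subset hK.center_mem fun _ hx => (hK.mem_adj_of_mem hx).1

lemma not_adj_of_mem {x y : V} (hx : x ∈ ({a, b, c} : Finset V))
    (hy : y ∈ ({a, b, c} : Finset V)) : ¬G.Adj x y := by
  have := hK.not_adj_ab; have := hK.not_adj_ac; have := hK.not_adj_bc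
  simp only [mem_insert, mem_singleton] at hx hy
  rcases hx with rfl | rfl | rfl <;> rcases hy with rfl | rfl | rfl <;>
    simp_all [G.adj_comm]

lemma nbrsIn_rest_center : nbrsIn G (s \ {v, a, b, c}) v = ∅ :=
  nbrsIn_sdiff_eq_empty G (by rw [hK.nbrsIn_center]; exact subset_insert _ _)

lemma card_nbrsIn_rest_of_mem {x : V} (hx : x ∈ ({a, b, c} : Finset V)) :
    #(nbrsIn G (s \ {v, a, b, c}) x) = 2 := by
  obtain ⟨hxs, hvx⟩ := hK.mem_adj_of_mem hx
  have hup := card_nbrsIn_sdiff_add_one_le G (mem_insert_self v {a, b, c})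
    (mem_nbrsIn.2 ⟨hK.center_mem, hvx.symm⟩)
  have hsub : nbrsIn G s x ⊆ insert v (nbrsIn G (s \ {v, a, b, c}) x) := by
    intro y hy
    rw [mem_nbrsIn] at hy
    by_cases hyY : y ∈ ({v, a, b, c} : Finset V)
    · rcases mem_insert.1 hyY with rfl | hy'
      · exact mem_insert_self _ _
      · exact absurd hy.2 (hK.not_adj_of_mem hx hy')
    · exact mem_insert_of_mem (mem_nbrsIn.2 ⟨mem_sdiff.2 ⟨hy.1, hyY⟩, hy.2⟩)
  have hlow := (card_le_card hsub).trans (card_insert_le _ _)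
  have := hK.cubic x hxs
  omega

lemma hasRainbowBlock (hL : ∀ x, #(L x) = k) (hk : 5 ≤ k) (hks : k ≤ #s) :
    HasRainbowBlock G L k s := by
  obtain ⟨ha, -⟩ := hK.mem_adj_of_mem (by simp : a ∈ ({a, b, c} : Finset V))
  obtain ⟨hb, hvb⟩ := hK.mem_adj_of_mem (by simp : b ∈ ({a, b, c} : Finset V))
  obtain ⟨hc, hvc⟩ := hK.mem_adj_of_mem (by simp : c ∈ ({a, b, c} : Finset V))
  obtain ⟨u, hu, huv⟩ :=
    exists_mem_ne (by rw [hK.cubic c hc]; norm_num : 1 < #(nbrsIn G s c)) v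
  set Y : Finset V := {u, v, a, b, c}
  have hvY : v ∈ Y := by simp [Y]
  refine hasRainbowBlock_of_tail hL (fun x hx => (hK.cubic x hx).le) hks (Y := Y) (y₁ := b)
    (y₂ := c) (y₃ := v) (by simp [Y, insert_subset_iff, (mem_nbrsIn.1 hu).1, hK.center_mem, *])
    (card_le_five.trans hk) (by simp [Y]) (by simp [Y]) hvY hK.leaves_ne.2.2
    (G.ne_of_adj hvb).symm (G.ne_of_adj hvc).symm ?_ ?_
    (by simp [hK.nbrsIn_center, Y, insert_subset_iff])
  · have := card_nbrsIn_sdiff_add_one_le G hvY (mem_nbrsIn.2 ⟨hK.center_mem, hvb.symm⟩)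
    have := hK.cubic b hb
    omega
  · have := card_nbrsIn_sdiff_add_two_le G hvY (by simp [Y] : u ∈ Y)
      (mem_nbrsIn.2 ⟨hK.center_mem, hvc.symm⟩) hu huv.symm
    have := hK.cubic c hc
    omega

end IsCubicClaw

theorem hasRainbowBlock_or_isCubicClaw (hL : ∀ x, #(L x) = k) {s : Finset V}
    (hs3 : ∀ x ∈ s, #(nbrsIn G s x) ≤ 3) (hsk : ∀ x ∈ s, #(nbrsIn G s x) < k) (hks : k < #s) :
    HasRainbowBlock G L k s ∨ k = 4 ∧ ∃ v a b c, IsCubicClaw G s v a b c := by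
  by_cases h2 : ∀ x ∈ s, #(nbrsIn G s x) ≤ 2
  · exact .inl (hasRainbowBlock_of_forall_card_nbrsIn_le_two hL h2 hsk hks.le (card_pos.1 (by omega)))
  push Not at h2
  obtain ⟨v, hv, hv3⟩ := h2
  replace hv3 : #(nbrsIn G s v) = 3 := le_antisymm (hs3 v hv) hv3
  have hk : 4 ≤ k := by have := hsk v hv; omega
  by_cases hA : ∃ z ∈ s, ∃ y ∈ nbrsIn G s z, #(nbrsIn G s z) = 3 ∧ #(nbrsIn G s y) ≤ 2
  · obtain ⟨z, hz, y, hy, hz3, hy2⟩ := hA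
    exact .inl (hasRainbowBlock_of_adj_of_card_le_two hL hs3 hk hks.le hz hz3 hy hy2)
  by_cases hB : ∃ z ∈ s, ∃ y₁ ∈ nbrsIn G s z, ∃ y₂ ∈ nbrsIn G s z, G.Adj y₁ y₂
  · obtain ⟨z, hz, y₁, hy₁, y₂, hy₂, h₁₂⟩ := hB
    exact .inl (hasRainbowBlock_of_triangle hL hs3 hk hks.le hz hy₁ hy₂ h₁₂)
  push Not at hA hB
  by_cases hC : ∃ w ∈ s, #(nbrsIn G s w) ≤ 2
  · obtain ⟨w, hw, hw2⟩ := hC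
    exact .inl (hasRainbowBlock_of_card_nbrsIn_le_two hL hs3 hk hks.le hw hw2 hv hv3 hA)
  push Not at hC
  obtain ⟨a, b, c, -, -, -, hN⟩ := card_eq_three.1 hv3
  have hK : IsCubicClaw G s v a b c := ⟨fun x hx => le_antisymm (hs3 x hx) (hC x hx), hv, hN,
    hB v hv a (by simp [hN]) b (by simp [hN]), hB v hv a (by simp [hN]) c (by simp [hN]),
    hB v hv b (by simp [hN]) c (by simp [hN])⟩
  rcases hk.eq_or_lt with h4 | h5
  · exact .inr ⟨h4.symm, v, a, b, c, hK⟩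
  · exact .inl (hK.hasRainbowBlock hL h5 hks.le)

section Recolouring

variable {c₀ : V → ℕ} {t : Finset V}

lemma mem_palette_update {x w : V} {χ γ : ℕ} (h : χ ∈ palette G L c₀ t x) (hγ : γ ≠ χ) :
    χ ∈ palette G L (Function.update c₀ w γ) t x := by
  rw [mem_palette] at h ⊢
  refine ⟨h.1, fun y hy => ?_⟩
  rcases eq_or_ne y w with rfl | hyw
  · simpa using hγ
  · simpa [hyw] using h.2 y hy

lemma IsListColoringOn.update (hc : IsListColoringOn G L t c₀) {w : V} {γ : ℕ}
    (hγ : γ ∈ palette G L c₀ t w) : IsListColoringOn G L t (Function.update c₀ w γ) := by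
  rw [mem_palette] at hγ
  refine ⟨fun x hx => ?_, fun x hx y hy hxy => ?_⟩
  · rcases eq_or_ne x w with rfl | hxw
    · simpa using hγ.1
    · simpa [hxw] using hc.1 x hx
  · rcases eq_or_ne x w with rfl | hxw
    · simpa [(G.ne_of_adj hxy).symm] using (hγ.2 y (mem_nbrsIn.2 ⟨hy, hxy⟩)).symm
    rcases eq_or_ne y w with rfl | hyw
    · simpa [hxw] using hγ.2 x (mem_nbrsIn.2 ⟨hx, hxy.symm⟩)
    · simpa [hxw, hyw] using hc.2 x hx y hy hxy

lemma card_filter_update_add {w : V} (hw : w ∈ t) (γ α : ℕ) :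
    #{x ∈ t | Function.update c₀ w γ x = α} + (if c₀ w = α then 1 else 0) =
      #{x ∈ t | c₀ x = α} + (if γ = α then 1 else 0) := by
  rw [card_filter, card_filter, ← sum_erase_add _ _ hw, ← sum_erase_add _ _ hw]
  simp only [Function.update_self]
  rw [sum_congr rfl fun x hx => by rw [Function.update_of_ne (ne_of_mem_erase hx)]]
  ring

lemma two_mul_le_card_filter_mem_pair {m χ₁ χ₂ : ℕ} (h₁₂ : χ₁ ≠ χ₂)
    (h₁ : m ≤ #{x ∈ t | c₀ x = χ₁}) (h₂ : m ≤ #{x ∈ t | c₀ x = χ₂}) :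
    2 * m ≤ #{x ∈ t | c₀ x ∈ ({χ₁, χ₂} : Finset ℕ)} := by
  have : {x ∈ t | c₀ x ∈ ({χ₁, χ₂} : Finset ℕ)} = {x ∈ t | c₀ x = χ₁} ∪ {x ∈ t | c₀ x = χ₂} := by
    ext
    simp [and_or_left]
  have hdisj : Disjoint {x ∈ t | c₀ x = χ₁} {x ∈ t | c₀ x = χ₂} :=
    disjoint_filter.2 fun _ _ h h' => h₁₂ (h.symm.trans h')
  rw [this, card_union_of_disjoint hdisj]
  omega

lemma nonempty_nbrsIn_of_palette_subset (hL : ∀ x, #(L x) = 4) {P : Finset ℕ} (hP : #P ≤ 2)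
    {w u : V} (h : palette G L c₀ (t.erase w) u ⊆ insert (c₀ u) P) :
    (nbrsIn G {y ∈ t | c₀ y ∉ P} u).Nonempty := by
  have h₁ := card_sdiff_le_card_nbrsIn_of_palette_subset G L h
  have h₂ := le_card_sdiff (insert (c₀ u) P) (L u)
  have h₃ := card_insert_le (c₀ u) P
  have h₄ := hL u
  have hpos : 0 < #(nbrsIn G {y ∈ t.erase w | c₀ y ∉ insert (c₀ u) P} u) := by omega
  refine (card_pos.1 hpos).mono (nbrsIn_mono G (fun y hy => ?_) u)
  simp only [mem_filter, mem_insert, not_or] at hy ⊢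
  exact ⟨mem_of_mem_erase hy.1, hy.2.2⟩

lemma nbrsIn_subset_of_palette_subset (hL : ∀ x, #(L x) = 4) {P : Finset ℕ} (hP : #P ≤ 2)
    {w : V} (hrec : palette G L c₀ t w ⊆ P)
    (hswap : ∀ u ∈ nbrsIn G t w, (∀ y ∈ nbrsIn G t w, c₀ y = c₀ u → y = u) → c₀ u ∈ L w →
      c₀ u ∉ P → palette G L c₀ (t.erase w) u ⊆ insert (c₀ u) P)
    (h2 : #(nbrsIn G {y ∈ t | c₀ y ∉ P} w) = 2) :
    nbrsIn G {y ∈ t | c₀ y ∉ P} w ⊆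
      nbrsIn G {u ∈ {y ∈ t | c₀ y ∉ P} | (nbrsIn G {y ∈ t | c₀ y ∉ P} u).Nonempty} w := by
  set U := {y ∈ t | c₀ y ∉ P}
  have hLw : 2 ≤ #(L w \ P) := by
    have := le_card_sdiff P (L w)
    have := hL w
    omega
  obtain ⟨u₁, u₂, -, hN⟩ := card_eq_two.1 h2
  have himg := sdiff_subset_image_of_palette_subset G L hrec
  rw [hN, image_insert, image_singleton] at himg
  have hcol : L w \ P = {c₀ u₁, c₀ u₂} := eq_of_subset_of_card_le himg (card_le_two.trans hLw)
  have hne : c₀ u₁ ≠ c₀ u₂ := fun h => by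
    rw [hcol, h, insert_eq_of_mem (mem_singleton_self _), card_singleton] at hLw
    omega
  intro u hu
  have hcu : c₀ u ∈ L w \ P := by
    rw [hcol]
    rw [hN] at hu
    rcases mem_insert.1 hu with rfl | hu <;> simp_all
  have huniq : ∀ y ∈ nbrsIn G t w, c₀ y = c₀ u → y = u := fun y hy hyu => by
    have hyU : y ∈ nbrsIn G U w := mem_nbrsIn.2 ⟨mem_filter.2 ⟨(mem_nbrsIn.1 hy).1,
      hyu ▸ (mem_sdiff.1 hcu).2⟩, (mem_nbrsIn.1 hy).2⟩
    rw [hN] at hyU hu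
    simp only [mem_insert, mem_singleton] at hyU hu
    rcases hyU with rfl | rfl <;> rcases hu with rfl | rfl <;> simp_all
  refine mem_nbrsIn.2 ⟨mem_filter.2 ⟨(mem_nbrsIn.1 hu).1, ?_⟩, (mem_nbrsIn.1 hu).2⟩
  exact nonempty_nbrsIn_of_palette_subset hL hP (hswap u (nbrsIn_mono G (filter_subset _ t) w hu)
    huniq (mem_sdiff.1 hcu).1 (mem_sdiff.1 hcu).2)

lemma six_le_of_palette_subset (hL : ∀ x, #(L x) = 4) {P : Finset ℕ} (hP : #P ≤ 2) {w : V}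
    (hrec : palette G L c₀ t w ⊆ P)
    (hswap : ∀ u ∈ nbrsIn G t w, (∀ y ∈ nbrsIn G t w, c₀ y = c₀ u → y = u) → c₀ u ∈ L w →
      c₀ u ∉ P → palette G L c₀ (t.erase w) u ⊆ insert (c₀ u) P) :
    6 ≤ 2 * #(nbrsIn G {y ∈ t | c₀ y ∉ P} w) +
      #(nbrsIn G {u ∈ {y ∈ t | c₀ y ∉ P} | (nbrsIn G {y ∈ t | c₀ y ∉ P} u).Nonempty} w) := by
  have hLw : 2 ≤ #(L w \ P) := by
    have := le_card_sdiff P (L w)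
    have := hL w
    omega
  have hU2 := hLw.trans (card_sdiff_le_card_nbrsIn_of_palette_subset G L hrec)
  rcases hU2.lt_or_eq with hU3 | hU2
  · omega
  have := card_le_card (nbrsIn_subset_of_palette_subset hL hP hrec hswap hU2.symm)
  omega

lemma exists_pair_subset_of_not_exists_distinct {A B C : Finset ℕ} (hA : 2 ≤ #A) (hB : 2 ≤ #B)
    (hC : 2 ≤ #C) (h : ¬∃ x ∈ A, ∃ y ∈ B, ∃ z ∈ C, x ≠ y ∧ x ≠ z ∧ y ≠ z) :
    ∃ χ₁ χ₂, χ₁ ≠ χ₂ ∧ χ₁ ∈ A ∩ B ∩ C ∧ χ₂ ∈ A ∩ B ∩ C := by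
  push Not at h
  have key : ∀ x ∈ A, ∀ y ∈ B, x ≠ y → C = {x, y} := fun x hx y hy hxy =>
    eq_of_subset_of_card_le (fun z hz => by
      by_contra hz'
      simp only [mem_insert, mem_singleton, not_or] at hz'
      exact hz'.2 (h x hx y hy z hz hxy (Ne.symm hz'.1)).symm) (card_le_two.trans hC)
  obtain ⟨x₁, hx₁, x₂, hx₂, h₁₂⟩ := one_lt_card.1 hA
  obtain ⟨y₁, hy₁, hy₁x⟩ := exists_mem_ne hB x₁
  obtain ⟨y₂, hy₂, hy₂x⟩ := exists_mem_ne hB x₂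
  have hC₁ := key x₁ hx₁ y₁ hy₁ hy₁x.symm
  have hC₂ := key x₂ hx₂ y₂ hy₂ hy₂x.symm
  have hx₁C : x₁ ∈ C := by simp [hC₁]
  have hx₂C : x₂ ∈ C := by simp [hC₂]
  rw [hC₂] at hx₁C
  rw [hC₁] at hx₂C
  simp only [mem_insert, mem_singleton, h₁₂, Ne.symm h₁₂, false_or] at hx₁C hx₂C
  rw [← hx₁C] at hy₂
  rw [← hx₂C] at hy₁ hC₁
  exact ⟨x₁, x₂, h₁₂, by simp [hx₁, hy₂, hC₁], by simp [hx₂, hy₁, hC₁]⟩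

end Recolouring

namespace IsCubicClaw

variable {s : Finset V} {v a b c : V} (hK : IsCubicClaw G s v a b c)
include hK

lemma exists_coloring_eq (δ αa αb αc : ℕ) : ∃ c₂ : V → ℕ,
    c₂ v = δ ∧ c₂ a = αa ∧ c₂ b = αb ∧ c₂ c = αc ∧
      ∀ α, #{x ∈ ({v, a, b, c} : Finset V) | c₂ x = α} = [δ, αa, αb, αc].count α := by
  obtain ⟨hva, hvb, hvc⟩ := hK.center_ne
  obtain ⟨hab, hac, hbc⟩ := hK.leaves_ne
  refine ⟨Function.update (Function.update (Function.update (fun _ => δ) a αa) b αb) c αc,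
    by simp [hva, hvb, hvc], by simp [hab, hac], by simp [hbc], by simp, fun α => ?_⟩
  rw [card_filter, sum_insert (by simp [hva, hvb, hvc]), sum_insert (by simp [hab, hac]),
    sum_insert (by simp [hbc]), sum_singleton]
  simp [List.count_cons, hva, hvb, hvc, hab, hac, hbc]
  omega

theorem hasCappedColoring_of_colors {c₁ : V → ℕ} {M δ αa αb αc : ℕ}
    (hc₁ : IsListColoringOn G L (s \ {v, a, b, c}) c₁)
    (ha : αa ∈ palette G L c₁ (s \ {v, a, b, c}) a)
    (hb : αb ∈ palette G L c₁ (s \ {v, a, b, c}) b)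
    (hc : αc ∈ palette G L c₁ (s \ {v, a, b, c}) c)
    (hδ : δ ∈ L v) (hδa : δ ≠ αa) (hδb : δ ≠ αb) (hδc : δ ≠ αc)
    (hM : ∀ α, #{x ∈ s \ {v, a, b, c} | c₁ x = α} + [δ, αa, αb, αc].count α ≤ M) :
    HasCappedColoring G L s M := by
  obtain ⟨c₂, hc₂v, hc₂a, hc₂b, hc₂c, hcount⟩ := hK.exists_coloring_eq δ αa αb αc
  have hleaf : ∀ x ∈ ({a, b, c} : Finset V),
      c₂ x ∈ palette G L c₁ (s \ {v, a, b, c}) x ∧ c₂ x ≠ δ := by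
    simp only [mem_insert, mem_singleton]
    rintro x (rfl | rfl | rfl)
    exacts [⟨hc₂a ▸ ha, hc₂a ▸ hδa.symm⟩, ⟨hc₂b ▸ hb, hc₂b ▸ hδb.symm⟩,
      ⟨hc₂c ▸ hc, hc₂c ▸ hδc.symm⟩]
  rw [← sdiff_union_of_subset hK.insert_subset]
  refine hasCappedColoring_union G L hc₁ ⟨fun x hx => ?_, fun x hx y hy hxy => ?_⟩
    (fun x hx y hy hxy => ?_) fun α => hcount α ▸ hM α
  · rcases mem_insert.1 hx with rfl | hx
    exacts [hc₂v ▸ hδ, (mem_palette.1 (hleaf x hx).1).1]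
  · rcases mem_insert.1 hx with hxv | hx <;> rcases mem_insert.1 hy with hyv | hy
    · exact absurd (hxv ▸ hyv ▸ hxy) (G.irrefl)
    · exact hxv ▸ hc₂v ▸ (hleaf y hy).2.symm
    · exact hyv ▸ hc₂v ▸ (hleaf x hx).2
    · exact absurd hxy (hK.not_adj_of_mem hx hy)
  · rcases mem_insert.1 hx with rfl | hx
    · simpa [hK.nbrsIn_rest_center] using mem_nbrsIn.2 ⟨hy, hxy⟩
    · exact ((mem_palette.1 (hleaf x hx).1).2 y (mem_nbrsIn.2 ⟨hy, hxy⟩)).symm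

theorem hasCappedColoring_of_distinct (hL : ∀ x, #(L x) = 4) {c₀ : V → ℕ} {m αa αb αc : ℕ}
    (hc₀ : IsListColoringOn G L (s \ {v, a, b, c}) c₀)
    (hm : ∀ α, #{x ∈ s \ {v, a, b, c} | c₀ x = α} ≤ m)
    (ha : αa ∈ palette G L c₀ (s \ {v, a, b, c}) a)
    (hb : αb ∈ palette G L c₀ (s \ {v, a, b, c}) b)
    (hc : αc ∈ palette G L c₀ (s \ {v, a, b, c}) c)
    (hab : αa ≠ αb) (hac : αa ≠ αc) (hbc : αb ≠ αc) : HasCappedColoring G L s (m + 1) := by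
  obtain ⟨δ, hδ, hδP⟩ := exists_mem_notMem_of_card_lt_card (s := {αa, αb, αc}) (t := L v)
    (card_le_three.trans_lt (by rw [hL]; norm_num))
  simp only [mem_insert, mem_singleton, not_or] at hδP
  refine hK.hasCappedColoring_of_colors hc₀ ha hb hc hδ hδP.1 hδP.2.1 hδP.2.2 fun α => ?_
  have hnd : [δ, αa, αb, αc].Nodup := by simp [*, Ne.symm]
  exact add_le_add (hm α) (List.nodup_iff_count_le_one.1 hnd α)

theorem hasCappedColoring_of_common_color (hL : ∀ x, #(L x) = 4) {c₁ : V → ℕ} {m χ χ' γ : ℕ}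
    (hc₁ : IsListColoringOn G L (s \ {v, a, b, c}) c₁)
    (ha : χ ∈ palette G L c₁ (s \ {v, a, b, c}) a)
    (hb : χ' ∈ palette G L c₁ (s \ {v, a, b, c}) b)
    (hc : χ ∈ palette G L c₁ (s \ {v, a, b, c}) c) (hχχ' : χ ≠ χ') (hγχ' : γ ≠ χ')
    (hχ : #{x ∈ s \ {v, a, b, c} | c₁ x = χ} + 1 ≤ m)
    (hle : ∀ α ≠ γ, #{x ∈ s \ {v, a, b, c} | c₁ x = α} ≤ m)
    (hγ : #{x ∈ s \ {v, a, b, c} | c₁ x = γ} ≤ m + 1) : HasCappedColoring G L s (m + 1) := by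
  obtain ⟨δ, hδ, hδP⟩ := exists_mem_notMem_of_card_lt_card (s := {χ, χ', γ}) (t := L v)
    (card_le_three.trans_lt (by rw [hL]; norm_num))
  simp only [mem_insert, mem_singleton, not_or] at hδP
  refine hK.hasCappedColoring_of_colors hc₁ ha hb hc hδ hδP.1 hδP.2.1 hδP.1 fun α => ?_
  have := hle δ hδP.2.2
  have := hle χ' hγχ'.symm
  simp only [List.count_cons, List.count_nil, beq_iff_eq]
  rcases eq_or_ne α γ with rfl | hαγ
  · split_ifs <;> subst_vars <;> omega
  · have := hle α hαγ
    split_ifs <;> subst_vars <;> omega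

theorem hasCappedColoring_of_transfer (hL : ∀ x, #(L x) = 4) {c₀ c₁ : V → ℕ} {m χ χ' γ : ℕ}
    (hm : ∀ α, #{x ∈ s \ {v, a, b, c} | c₀ x = α} ≤ m)
    (hc₁ : IsListColoringOn G L (s \ {v, a, b, c}) c₁)
    (ha : χ ∈ palette G L c₁ (s \ {v, a, b, c}) a)
    (hb : χ' ∈ palette G L c₁ (s \ {v, a, b, c}) b)
    (hc : χ ∈ palette G L c₁ (s \ {v, a, b, c}) c) (hχχ' : χ ≠ χ') (hγχ : γ ≠ χ)
    (hγχ' : γ ≠ χ')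
    -- `c₁` arises from `c₀` by moving one vertex from the class of `χ` to that of `γ`
    (htr : ∀ α, #{x ∈ s \ {v, a, b, c} | c₁ x = α} + (if χ = α then 1 else 0) =
      #{x ∈ s \ {v, a, b, c} | c₀ x = α} + (if γ = α then 1 else 0)) :
    HasCappedColoring G L s (m + 1) := by
  refine hK.hasCappedColoring_of_common_color hL hc₁ ha hb hc hχχ' hγχ' ?_ (fun α hα => ?_) ?_
  · have h := htr χ
    rw [if_pos rfl, if_neg hγχ] at h
    have := hm χ
    omega
  · have := htr α
    have := hm α
    simp only [if_neg hα.symm] at *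
    split_ifs at * <;> omega
  · have h := htr γ
    rw [if_pos rfl, if_neg hγχ.symm] at h
    have := hm γ
    omega

theorem hasCappedColoring_of_recolor (hL : ∀ x, #(L x) = 4) {c₀ : V → ℕ} {m χ χ' γ : ℕ}
    {w : V} (hc₀ : IsListColoringOn G L (s \ {v, a, b, c}) c₀)
    (hm : ∀ α, #{x ∈ s \ {v, a, b, c} | c₀ x = α} ≤ m)
    (ha : χ ∈ palette G L c₀ (s \ {v, a, b, c}) a)
    (hb : χ' ∈ palette G L c₀ (s \ {v, a, b, c}) b)
    (hc : χ ∈ palette G L c₀ (s \ {v, a, b, c}) c) (hχχ' : χ ≠ χ')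
    (hw : w ∈ s \ {v, a, b, c}) (hwχ : c₀ w = χ) (hγ : γ ∈ palette G L c₀ (s \ {v, a, b, c}) w)
    (hγχ : γ ≠ χ) (hγχ' : γ ≠ χ') : HasCappedColoring G L s (m + 1) :=
  hK.hasCappedColoring_of_transfer hL hm (hc₀.update hγ) (mem_palette_update ha hγχ)
    (mem_palette_update hb hγχ') (mem_palette_update hc hγχ) hχχ' hγχ hγχ'
    fun α => hwχ ▸ card_filter_update_add hw γ α

theorem hasCappedColoring_of_swap (hL : ∀ x, #(L x) = 4) {c₀ : V → ℕ} {m χ χ' γ : ℕ}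
    {w u : V} (hc₀ : IsListColoringOn G L (s \ {v, a, b, c}) c₀)
    (hm : ∀ α, #{x ∈ s \ {v, a, b, c} | c₀ x = α} ≤ m)
    (ha : χ ∈ palette G L c₀ (s \ {v, a, b, c}) a)
    (hb : χ' ∈ palette G L c₀ (s \ {v, a, b, c}) b)
    (hc : χ ∈ palette G L c₀ (s \ {v, a, b, c}) c) (hχχ' : χ ≠ χ')
    (hw : w ∈ s \ {v, a, b, c}) (hwχ : c₀ w = χ) (hu : u ∈ nbrsIn G (s \ {v, a, b, c}) w)
    (huniq : ∀ y ∈ nbrsIn G (s \ {v, a, b, c}) w, c₀ y = c₀ u → y = u) (huL : c₀ u ∈ L w)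
    (huχ : c₀ u ≠ χ) (huχ' : c₀ u ≠ χ') (hγ : γ ∈ palette G L c₀ ((s \ {v, a, b, c}).erase w) u)
    (hγχ : γ ≠ χ) (hγχ' : γ ≠ χ') (hγu : γ ≠ c₀ u) : HasCappedColoring G L s (m + 1) := by
  obtain ⟨huH, hwu⟩ := mem_nbrsIn.1 hu
  have hγ' : γ ∈ palette G L c₀ (s \ {v, a, b, c}) u := by
    refine mem_palette.2 ⟨(mem_palette.1 hγ).1, fun y hy => ?_⟩
    rcases eq_or_ne y w with rfl | hyw
    · exact hwχ ▸ hγχ.symm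
    · exact (mem_palette.1 hγ).2 y (mem_nbrsIn.2 ⟨mem_erase.2 ⟨hyw, (mem_nbrsIn.1 hy).1⟩,
        (mem_nbrsIn.1 hy).2⟩)
  have hc'w : Function.update c₀ u γ w = χ := by simp [G.ne_of_adj hwu, hwχ]
  have hcu : c₀ u ∈ palette G L (Function.update c₀ u γ) (s \ {v, a, b, c}) w := by
    refine mem_palette.2 ⟨huL, fun y hy => ?_⟩
    rcases eq_or_ne y u with rfl | hyu
    · simpa using hγu
    · simpa [hyu] using fun h => hyu (huniq y hy h)
  refine hK.hasCappedColoring_of_transfer hL hm (((hc₀.update hγ').update hcu))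
    (mem_palette_update (mem_palette_update ha hγχ) huχ)
    (mem_palette_update (mem_palette_update hb hγχ') huχ')
    (mem_palette_update (mem_palette_update hc hγχ) huχ) hχχ' hγχ hγχ' fun α => ?_
  have h₁ := card_filter_update_add (c₀ := Function.update c₀ u γ) hw (c₀ u) α
  have h₂ := card_filter_update_add (c₀ := c₀) huH γ α
  rw [hc'w] at h₁
  omega

lemma card_nbrsIn_rest_add {x : V} (hx : x ∈ s \ {v, a, b, c}) :
    #(nbrsIn G (s \ {v, a, b, c}) x) + #(nbrsIn G {v, a, b, c} x) = 3 := by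
  rw [← card_nbrsIn_union G sdiff_disjoint, sdiff_union_of_subset hK.insert_subset]
  exact hK.cubic x (mem_sdiff.1 hx).1

lemma sum_card_nbrsIn_eq_six {c₀ : V → ℕ} {P : Finset ℕ}
    (hP : ∀ χ ∈ P, ∀ x ∈ ({a, b, c} : Finset V), χ ∈ palette G L c₀ (s \ {v, a, b, c}) x) :
    ∑ u ∈ {y ∈ s \ {v, a, b, c} | c₀ y ∉ P}, #(nbrsIn G {v, a, b, c} u) = 6 := by
  set U := {y ∈ s \ {v, a, b, c} | c₀ y ∉ P}
  have hleaf : ∀ x ∈ ({a, b, c} : Finset V), #(nbrsIn G U x) = 2 := fun x hx => by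
    rw [← hK.card_nbrsIn_rest_of_mem hx]
    congr 1
    ext y
    simp only [U, mem_nbrsIn, mem_filter, and_congr_left_iff, and_iff_left_iff_imp]
    exact fun hxy hy hyP => (mem_palette.1 (hP _ hyP x hx)).2 y (mem_nbrsIn.2 ⟨hy, hxy⟩) rfl
  have hv : nbrsIn G U v = ∅ :=
    subset_empty.1 (hK.nbrsIn_rest_center ▸ nbrsIn_mono G (filter_subset _ _) v)
  obtain ⟨hva, hvb, hvc⟩ := hK.center_ne
  obtain ⟨hab, hac, hbc⟩ := hK.leaves_ne
  rw [sum_card_nbrsIn_comm, sum_insert (by simp [hva, hvb, hvc]), sum_insert (by simp [hab, hac]),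
    sum_insert (by simp [hbc]), sum_singleton, hv, hleaf a (by simp), hleaf b (by simp),
    hleaf c (by simp), card_empty]
  rfl

theorem false_of_no_recolor_of_no_swap (hL : ∀ x, #(L x) = 4) {c₀ : V → ℕ} {m : ℕ} {P : Finset ℕ}
    (hP : #P ≤ 2) (hHm : #(s \ {v, a, b, c}) ≤ 4 * m)
    (hW : 2 * m ≤ #{y ∈ s \ {v, a, b, c} | c₀ y ∈ P})
    (hpal : ∀ χ ∈ P, ∀ x ∈ ({a, b, c} : Finset V), χ ∈ palette G L c₀ (s \ {v, a, b, c}) x)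
    (hrec : ∀ w ∈ s \ {v, a, b, c}, c₀ w ∈ P → palette G L c₀ (s \ {v, a, b, c}) w ⊆ P)
    (hswap : ∀ w ∈ s \ {v, a, b, c}, c₀ w ∈ P → ∀ u ∈ nbrsIn G (s \ {v, a, b, c}) w,
      (∀ y ∈ nbrsIn G (s \ {v, a, b, c}) w, c₀ y = c₀ u → y = u) → c₀ u ∈ L w → c₀ u ∉ P →
        palette G L c₀ ((s \ {v, a, b, c}).erase w) u ⊆ insert (c₀ u) P) : False := by
  set H := s \ {v, a, b, c}
  set U := {y ∈ H | c₀ y ∉ P}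
  have hsplit : ∀ x ∈ H, #(nbrsIn G {y ∈ H | c₀ y ∈ P} x) + #(nbrsIn G U x) +
      #(nbrsIn G {v, a, b, c} x) = 3 := fun x hx => by
    rw [← card_nbrsIn_union G (disjoint_filter_filter_not _ _ _), filter_union_filter_not_eq]
    exact hK.card_nbrsIn_rest_add hx
  have hcount := three_mul_card_le_sum G (W := {y ∈ H | c₀ y ∈ P}) (U := U)
    (fun w hw => six_le_of_palette_subset hL hP (hrec w (mem_filter.1 hw).1 (mem_filter.1 hw).2)
      (hswap w (mem_filter.1 hw).1 (mem_filter.1 hw).2))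
    (fun u hu => by have := hsplit u (mem_filter.1 hu).1; omega)
  have hsum : ∑ u ∈ U, (#(nbrsIn G {y ∈ H | c₀ y ∈ P} u) + #(nbrsIn G U u)) + 6 = 3 * #U := by
    rw [← hK.sum_card_nbrsIn_eq_six hpal, ← sum_add_distrib,
      sum_congr rfl fun u hu => hsplit u (mem_filter.1 hu).1, sum_const, smul_eq_mul, mul_comm]
  have : #{y ∈ H | c₀ y ∈ P} + #U = #H := card_filter_add_card_filter_not _
  omega

theorem hasCappedColoring_of_common_pair (hL : ∀ x, #(L x) = 4) {c₀ : V → ℕ} {m χ₁ χ₂ : ℕ}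
    (hc₀ : IsListColoringOn G L (s \ {v, a, b, c}) c₀)
    (hm : ∀ α, #{x ∈ s \ {v, a, b, c} | c₀ x = α} ≤ m) (hHm : #(s \ {v, a, b, c}) ≤ 4 * m)
    (h₁₂ : χ₁ ≠ χ₂) (hpal : ∀ χ ∈ ({χ₁, χ₂} : Finset ℕ), ∀ x ∈ ({a, b, c} : Finset V),
      χ ∈ palette G L c₀ (s \ {v, a, b, c}) x) : HasCappedColoring G L s (m + 1) := by
  have p₁ : ∀ x ∈ ({a, b, c} : Finset V), χ₁ ∈ palette G L c₀ (s \ {v, a, b, c}) x :=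
    hpal χ₁ (by simp)
  have p₂ : ∀ x ∈ ({a, b, c} : Finset V), χ₂ ∈ palette G L c₀ (s \ {v, a, b, c}) x :=
    hpal χ₂ (by simp)
  by_cases hs₁ : #{x ∈ s \ {v, a, b, c} | c₀ x = χ₁} + 1 ≤ m
  · exact hK.hasCappedColoring_of_common_color hL hc₀ (p₁ a (by simp)) (p₂ b (by simp))
      (p₁ c (by simp)) h₁₂ h₁₂ hs₁ (fun α _ => hm α) ((hm χ₁).trans m.le_succ)
  by_cases hs₂ : #{x ∈ s \ {v, a, b, c} | c₀ x = χ₂} + 1 ≤ m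
  · exact hK.hasCappedColoring_of_common_color hL hc₀ (p₂ a (by simp)) (p₁ b (by simp))
      (p₂ c (by simp)) h₁₂.symm h₁₂.symm hs₂ (fun α _ => hm α) ((hm χ₂).trans m.le_succ)
  by_cases hrec : ∃ w ∈ s \ {v, a, b, c}, c₀ w ∈ ({χ₁, χ₂} : Finset ℕ) ∧
      ∃ γ ∈ palette G L c₀ (s \ {v, a, b, c}) w, γ ∉ ({χ₁, χ₂} : Finset ℕ)
  · obtain ⟨w, hw, hwP, γ, hγ, hγP⟩ := hrec
    simp only [mem_insert, mem_singleton, not_or] at hwP hγP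
    rcases hwP with hwχ | hwχ
    · exact hK.hasCappedColoring_of_recolor hL hc₀ hm (p₁ a (by simp)) (p₂ b (by simp))
        (p₁ c (by simp)) h₁₂ hw hwχ hγ hγP.1 hγP.2
    · exact hK.hasCappedColoring_of_recolor hL hc₀ hm (p₂ a (by simp)) (p₁ b (by simp))
        (p₂ c (by simp)) h₁₂.symm hw hwχ hγ hγP.2 hγP.1
  by_cases hswap : ∃ w ∈ s \ {v, a, b, c}, c₀ w ∈ ({χ₁, χ₂} : Finset ℕ) ∧
      ∃ u ∈ nbrsIn G (s \ {v, a, b, c}) w,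
        (∀ y ∈ nbrsIn G (s \ {v, a, b, c}) w, c₀ y = c₀ u → y = u) ∧ c₀ u ∈ L w ∧
        c₀ u ∉ ({χ₁, χ₂} : Finset ℕ) ∧ ∃ γ ∈ palette G L c₀ ((s \ {v, a, b, c}).erase w) u,
          γ ∉ insert (c₀ u) ({χ₁, χ₂} : Finset ℕ)
  · obtain ⟨w, hw, hwP, u, hu, huniq, huL, huP, γ, hγ, hγP⟩ := hswap
    simp only [mem_insert, mem_singleton, not_or] at hwP huP hγP
    rcases hwP with hwχ | hwχ
    · exact hK.hasCappedColoring_of_swap hL hc₀ hm (p₁ a (by simp)) (p₂ b (by simp))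
        (p₁ c (by simp)) h₁₂ hw hwχ hu huniq huL huP.1 huP.2 hγ hγP.2.1 hγP.2.2 hγP.1
    · exact hK.hasCappedColoring_of_swap hL hc₀ hm (p₂ a (by simp)) (p₁ b (by simp))
        (p₂ c (by simp)) h₁₂.symm hw hwχ hu huniq huL huP.2 huP.1 hγ hγP.2.2 hγP.2.1 hγP.1
  push Not at hrec hswap
  exact (hK.false_of_no_recolor_of_no_swap hL card_le_two hHm
    (two_mul_le_card_filter_mem_pair h₁₂ (by omega) (by omega)) hpal
    (fun w hw hwP γ hγ => hrec w hw hwP γ hγ)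
    fun w hw hwP u hu huniq huL huP γ hγ => hswap w hw hwP u hu huniq huL huP γ hγ).elim

theorem hasCappedColoring (hL : ∀ x, #(L x) = 4) {m : ℕ}
    (hH : HasCappedColoring G L (s \ {v, a, b, c}) m) (hHm : #(s \ {v, a, b, c}) ≤ 4 * m) :
    HasCappedColoring G L s (m + 1) := by
  obtain ⟨c₀, hc₀, hm⟩ := hH
  have hpal : ∀ x ∈ ({a, b, c} : Finset V), 2 ≤ #(palette G L c₀ (s \ {v, a, b, c}) x) :=
    fun x hx => by
      have := card_sdiff_le_card_palette G L c₀ (s \ {v, a, b, c}) x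
      rw [hL, hK.card_nbrsIn_rest_of_mem hx] at this
      omega
  by_cases hsdr : ∃ αa ∈ palette G L c₀ (s \ {v, a, b, c}) a,
      ∃ αb ∈ palette G L c₀ (s \ {v, a, b, c}) b, ∃ αc ∈ palette G L c₀ (s \ {v, a, b, c}) c,
        αa ≠ αb ∧ αa ≠ αc ∧ αb ≠ αc
  · obtain ⟨αa, ha, αb, hb, αc, hc, hab, hac, hbc⟩ := hsdr
    exact hK.hasCappedColoring_of_distinct hL hc₀ hm ha hb hc hab hac hbc
  obtain ⟨χ₁, χ₂, h₁₂, h₁, h₂⟩ := exists_pair_subset_of_not_exists_distinct (hpal a (by simp))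
    (hpal b (by simp)) (hpal c (by simp)) hsdr
  refine hK.hasCappedColoring_of_common_pair hL hc₀ hm hHm h₁₂ fun χ hχ x hx => ?_
  simp only [mem_inter, mem_insert, mem_singleton] at h₁ h₂ hχ hx
  rcases hχ with rfl | rfl <;> rcases hx with rfl | rfl | rfl <;> tauto

end IsCubicClaw

theorem hasCappedColoring_of_degree_lt [Fintype V] (hL : ∀ x, #(L x) = k)
    (h3 : ∀ x, G.degree x ≤ 3) (hk : ∀ x, G.degree x < k) (s : Finset V) :
    HasCappedColoring G L s ((#s + k - 1) / k) := by
  induction s using Finset.strongInduction with | H s ih => ?_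
  obtain rfl | ⟨x₀, hx₀⟩ := s.eq_empty_or_nonempty
  · exact hasCappedColoring_empty G L _
  have hk0 : 0 < k := (Nat.zero_le _).trans_lt (hk x₀)
  have hs3 : ∀ x ∈ s, #(nbrsIn G s x) ≤ 3 := fun x _ => (card_nbrsIn_le_degree G s x).trans (h3 x)
  have hsk : ∀ x ∈ s, #(nbrsIn G s x) < k := fun x _ =>
    (card_nbrsIn_le_degree G s x).trans_lt (hk x)
  by_cases hks : #s ≤ k
  · have hs := (hasCappedColoring_empty G L 0).union_of_rainbowExtendable
      (rainbowExtendable_of_forall (G := G) hL (t := ∅) (B := s) (by simp [nbrsIn, hks]))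
    rw [empty_union] at hs
    refine hs.mono ((Nat.le_div_iff_mul_le hk0).2 ?_)
    have := card_pos.2 ⟨x₀, hx₀⟩
    omega
  push Not at hks
  rcases hasRainbowBlock_or_isCubicClaw hL hs3 hsk hks with
    ⟨X, hXs, hX, hXr⟩ | ⟨rfl, v, a, b, c, hK⟩
  · have hrest := (ih _ (sdiff_ssubset hXs (card_pos.1 (by omega)))).union_of_rainbowExtendable hXr
    rw [sdiff_union_of_subset hXs, card_sdiff_of_subset hXs, hX] at hrest
    refine hrest.mono (le_of_eq ?_)
    rw [show #s + k - 1 = #s - k + k - 1 + k by omega, Nat.add_div_right _ hk0]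
  · have hH := card_sdiff_of_subset hK.insert_subset
    rw [hK.card_eq_four] at hH
    refine (hK.hasCappedColoring hL (ih _ (sdiff_ssubset hK.insert_subset (by simp))) ?_).mono ?_
    all_goals omega

end EquitableChoosability

/-- Every finite simple graph `G` with maximum degree `Δ(G) ≤ 3` is equitably
`k`-choosable whenever `k ≥ Δ(G) + 1`: for every `k`-uniform list assignment `L`
there is a proper coloring `c` with `c v ∈ L v` for all `v` in which each color
appears on at most `⌈|V(G)|/k⌉` vertices. -/
theorem equitably_choosable_of_maxDegree_le_three {V : Type*} [Fintype V] [DecidableEq V]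
    (G : SimpleGraph V) [DecidableRel G.Adj] (hΔ : G.maxDegree ≤ 3)
    (k : ℕ) (hk : G.maxDegree + 1 ≤ k)
    (L : V → Finset ℕ) (hL : ∀ v : V, (L v).card = k) :
    ∃ c : V → ℕ,
      (∀ v : V, c v ∈ L v) ∧
      (∀ u v : V, G.Adj u v → c u ≠ c v) ∧
      ∀ α : ℕ,
        (Finset.univ.filter fun v => c v = α).card ≤ (Fintype.card V + k - 1) / k := by
  obtain ⟨c, ⟨hcL, hcG⟩, hc⟩ := EquitableChoosability.hasCappedColoring_of_degree_lt hL
    (fun x => (G.degree_le_maxDegree x).trans hΔ)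
    (fun x => (G.degree_le_maxDegree x).trans_lt (by omega)) univ
  exact ⟨c, fun v => hcL v (mem_univ v), fun u v h => hcG u (mem_univ u) v (mem_univ v) h,
    fun α => card_univ (α := V) ▸ hc α⟩
end

section
/- For every positive integer n and every integer l with l ≥ 2n+2, the complete bipartite graph K_{2n+1,2n+1} is equitably l-colorable; together with the fact that K_{2n+1,2n+1} is not equitably (2n+1)-colorable, this says that the equitable chromatic threshold of K_{2n+1,2n+1} equals 2n+2. -/
/-!
Give each side of `K_{m,m}` its own palette, of `⌊l/2⌋` and `⌈l/2⌉` colours, and colour a side by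
reducing an enumeration of it modulo the size of its palette. For `m < l` every colour class then
has `q` or `q + 1` elements, with `q = 1` if `l ≤ 2m` and `q = 0` otherwise.

Conversely, in an equitable `m`-colouring of `K_{m,m}` every class has exactly two elements and
lies inside one side, so `m` is even.
-/

/-- `G` is equitably `k`-colorable: there is a proper coloring of `G` with `k`
colors in which the sizes of any two color classes differ by at most 1. -/
def EquitablyColorable {V : Type*} [Fintype V] (G : SimpleGraph V) (k : ℕ) : Prop :=
  ∃ c : V → Fin k,
    (∀ u v : V, G.Adj u v → c u ≠ c v) ∧
    ∀ i j : Fin k,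
      (Finset.univ.filter fun v => c v = i).card ≤
        (Finset.univ.filter fun v => c v = j).card + 1

open Finset

theorem Fin.card_filter_val_mod_eq {N p j : ℕ} (hj : j < p) :
    #{i : Fin N | (i : ℕ) % p = j} = N / p + if j < N % p then 1 else 0 := by
  rw [← Nat.mod_eq_of_lt hj, ← Nat.count_modEq_card _ (by omega), Nat.count_eq_card_filter_range,
    ← Nat.Iio_eq_range, ← Fin.map_valEmbedding_univ, filter_map, card_map]
  rfl

theorem Fintype.exists_card_fiber_mem_Icc {V : Type*} [Fintype V] {p q : ℕ}
    (hlo : p * q ≤ Fintype.card V) (hhi : Fintype.card V ≤ p * (q + 1)) :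
    ∃ f : V → Fin p, ∀ j, q ≤ #{v | f v = j} ∧ #{v | f v = j} ≤ q + 1 := by
  rcases Nat.eq_zero_or_pos p with rfl | hp
  · have : IsEmpty V := Fintype.card_eq_zero_iff.1 (by omega)
    exact ⟨isEmptyElim, fun j => j.elim0⟩
  refine ⟨fun v => ⟨Fintype.equivFin V v % p, Nat.mod_lt _ hp⟩, fun j => ?_⟩
  have hcard : #{v | (⟨Fintype.equivFin V v % p, Nat.mod_lt _ hp⟩ : Fin p) = j}
      = #{i : Fin (Fintype.card V) | (i : ℕ) % p = j} :=
    Finset.card_equiv (Fintype.equivFin V) (by simp [Fin.ext_iff])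
  rw [hcard, Fin.card_filter_val_mod_eq j.2]
  have hq : q ≤ Fintype.card V / p := (Nat.le_div_iff_mul_le hp).2 (by rwa [mul_comm])
  have hq' : Fintype.card V / p ≤ q + 1 := Nat.div_le_of_le_mul hhi
  have hdiv := Nat.div_add_mod (Fintype.card V) p
  rcases hq'.eq_or_lt with heq | hlt
  · rw [heq] at hdiv ⊢
    split_ifs <;> omega
  · split_ifs <;> omega

theorem Finset.card_filter_univ_sum {α β : Type*} [Fintype α] [Fintype β]
    (P : α ⊕ β → Prop) [DecidablePred P] :
    #{v | P v} = #{a | P (Sum.inl a)} + #{b | P (Sum.inr b)} := by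
  simp only [card_filter, Fintype.sum_sum_type]

theorem equitablyColorable_completeBipartiteGraph_of_card_fiber_mem_Icc
    {V W : Type*} [Fintype V] [Fintype W] {p r q : ℕ} (f : V → Fin p) (g : W → Fin r)
    (hf : ∀ i, q ≤ #{v | f v = i} ∧ #{v | f v = i} ≤ q + 1)
    (hg : ∀ j, q ≤ #{w | g w = j} ∧ #{w | g w = j} ≤ q + 1) :
    EquitablyColorable (completeBipartiteGraph V W) (p + r) := by
  set c : V ⊕ W → Fin (p + r) := Sum.elim (Fin.castAdd r ∘ f) (Fin.natAdd p ∘ g)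
  have hne : ∀ i j, Fin.castAdd r i ≠ Fin.natAdd p j := fun i j h => by
    have := congrArg Fin.val h
    simp only [Fin.val_castAdd, Fin.val_natAdd] at this
    omega
  have hc : ∀ k, q ≤ #{x | c x = k} ∧ #{x | c x = k} ≤ q + 1 := by
    refine Fin.addCases (fun i => ?_) (fun j => ?_)
    · simpa [c, card_filter_univ_sum, fun j => (hne i j).symm] using hf i
    · simpa [c, card_filter_univ_sum, hne] using hg j
  refine ⟨c, ?_, fun i j => by have := hc i; have := hc j; omega⟩
  rintro (a | b) (a' | b') hadj <;> simp [c, hne, fun i j => (hne i j).symm] at hadj ⊢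

theorem equitablyColorable_completeBipartiteGraph_of_card_lt {V W : Type*} [Fintype V]
    [Fintype W] {l : ℕ} (hVW : Fintype.card V = Fintype.card W) (hl : Fintype.card V < l) :
    EquitablyColorable (completeBipartiteGraph V W) l := by
  obtain ⟨q, hlo, hhi, hlo', hhi'⟩ : ∃ q,
      l / 2 * q ≤ Fintype.card V ∧ Fintype.card V ≤ l / 2 * (q + 1) ∧
      (l - l / 2) * q ≤ Fintype.card W ∧ Fintype.card W ≤ (l - l / 2) * (q + 1) := by
    rcases le_or_gt l (2 * Fintype.card V) with h | h
    · exact ⟨1, by omega⟩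
    · exact ⟨0, by omega⟩
  obtain ⟨f, hf⟩ := Fintype.exists_card_fiber_mem_Icc hlo hhi
  obtain ⟨g, hg⟩ := Fintype.exists_card_fiber_mem_Icc hlo' hhi'
  rw [show l = l / 2 + (l - l / 2) by omega]
  exact equitablyColorable_completeBipartiteGraph_of_card_fiber_mem_Icc f g hf hg

theorem card_fiber_eq_of_card_eq_mul {V : Type*} [Fintype V] {k s : ℕ} (c : V → Fin k)
    (hc : ∀ i j, #{v | c v = i} ≤ #{v | c v = j} + 1) (hV : Fintype.card V = k * s) (i : Fin k) :
    #{v | c v = i} = s := by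
  have hsum : ∑ j, #{v | c v = j} = ∑ _j : Fin k, s := by
    rw [← card_eq_sum_card_fiberwise (fun v _ => mem_univ (c v))]
    simp [hV]
  by_contra hne
  rcases lt_or_gt_of_ne hne with hlt | hgt
  · exact hsum.not_lt (sum_lt_sum (fun j _ => by have := hc j i; omega) ⟨i, mem_univ _, hlt⟩)
  · exact hsum.not_gt (sum_lt_sum (fun j _ => by have := hc i j; omega) ⟨i, mem_univ _, hgt⟩)

theorem completeBipartiteGraph.card_left_fiber_eq_zero_or_card_right_fiber_eq_zero
    {V W : Type*} [Fintype V] [Fintype W] {k : ℕ} {c : V ⊕ W → Fin k}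
    (hc : ∀ u v, (completeBipartiteGraph V W).Adj u v → c u ≠ c v) (i : Fin k) :
    #{a | c (Sum.inl a) = i} = 0 ∨ #{b | c (Sum.inr b) = i} = 0 := by
  by_contra! h
  obtain ⟨a, ha⟩ := card_ne_zero.1 h.1
  obtain ⟨b, hb⟩ := card_ne_zero.1 h.2
  exact hc (Sum.inl a) (Sum.inr b) (by simp) (((mem_filter.1 ha).2).trans (mem_filter.1 hb).2.symm)

theorem not_equitablyColorable_completeBipartiteGraph {V W : Type*} [Fintype V] [Fintype W]
    {k : ℕ} (hV : Odd (Fintype.card V)) (hk : Fintype.card V + Fintype.card W = 2 * k) :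
    ¬ EquitablyColorable (completeBipartiteGraph V W) k := by
  rintro ⟨c, hproper, hbal⟩
  have hpair : ∀ i, #{a | c (Sum.inl a) = i} + #{b | c (Sum.inr b) = i} = 2 := fun i => by
    rw [← card_filter_univ_sum (fun x => c x = i)]
    exact card_fiber_eq_of_card_eq_mul c hbal (by simp [hk, mul_comm]) i
  have hsum : Fintype.card V = ∑ i, #{a | c (Sum.inl a) = i} :=
    card_eq_sum_card_fiberwise (fun a _ => mem_univ (c (Sum.inl a)))
  refine Nat.not_even_iff_odd.2 hV (hsum ▸ even_sum _ fun i _ => ?_)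
  rcases completeBipartiteGraph.card_left_fiber_eq_zero_or_card_right_fiber_eq_zero hproper i
    with h | h
  · simp [h]
  · exact ⟨1, by have := hpair i; omega⟩

theorem equitableChromaticThreshold_completeBipartite_general (n : ℕ) :
    (∀ l : ℕ, 2 * n + 2 ≤ l →
      EquitablyColorable (completeBipartiteGraph (Fin (2 * n + 1)) (Fin (2 * n + 1))) l) ∧
    IsLeast {k : ℕ | ∀ l : ℕ, k ≤ l →
      EquitablyColorable (completeBipartiteGraph (Fin (2 * n + 1)) (Fin (2 * n + 1))) l}
      (2 * n + 2) := by
  have hcol : ∀ l, 2 * n + 2 ≤ l →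
      EquitablyColorable (completeBipartiteGraph (Fin (2 * n + 1)) (Fin (2 * n + 1))) l :=
    fun l hl =>
      equitablyColorable_completeBipartiteGraph_of_card_lt rfl (by rw [Fintype.card_fin]; omega)
  refine ⟨hcol, hcol, fun k hk => ?_⟩
  by_contra! hlt
  exact not_equitablyColorable_completeBipartiteGraph (by simp)
    (by simp only [Fintype.card_fin]; ring) (hk (2 * n + 1) (by omega))

/-- For every positive integer `n`, the complete bipartite graph `K_{2n+1,2n+1}` is
equitably `l`-colorable for every `l ≥ 2n+2`; together with the fact that it is not
equitably `(2n+1)`-colorable, this says that its equitable chromatic threshold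
equals `2n+2`. -/
theorem equitableChromaticThreshold_completeBipartite (n : ℕ) (hn : 0 < n) :
    (∀ l : ℕ, 2 * n + 2 ≤ l →
      EquitablyColorable (completeBipartiteGraph (Fin (2 * n + 1)) (Fin (2 * n + 1))) l) ∧
    IsLeast {k : ℕ | ∀ l : ℕ, k ≤ l →
      EquitablyColorable (completeBipartiteGraph (Fin (2 * n + 1)) (Fin (2 * n + 1))) l}
      (2 * n + 2) :=
  equitableChromaticThreshold_completeBipartite_general n
end
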